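/- arXiv:2304.06656 — 7 statements merged into one kernel-verified Lean document; each statement's English description precedes it below -/
import Mathlib

section
/- Let G = (V,E) be a finite, 2-edge-connected, undirected graph with two distinguished distinct vertices s and t, and consider the single relative demand (s,t,3). Then there exists a finite set D of unordered pairs of vertices of G such that: (i) every pair {u,v} in D is an ordinary 3-demand, i.e., for every edge set F ⊆ E with |F| ≤ 2, the vertices u and v remain connected in G∖F; and (ii) for every spanning subgraph H of G that contains all forced edges, H satisfies the relative demand (s,t,3) if and only if for every pair {u,v} in D and every F ⊆ E(H) with |F| ≤ 2, u and v are connected in H∖F. -/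
open SimpleGraph

/-- Edges of `G` with exactly one endpoint in `A`. -/
def delta {V : Type*} (G : SimpleGraph V) (A : Set V) : Set (Sym2 V) :=
  {e | e ∈ G.edgeSet ∧ ∃ u v, e = s(u, v) ∧ u ∈ A ∧ v ∉ A}

/-- `G` is 2-edge-connected: connected and still connected after deleting any single edge. -/
def TwoEdgeConnected {V : Type*} (G : SimpleGraph V) : Prop :=
  G.Connected ∧ ∀ e ∈ G.edgeSet, (G.deleteEdges {e}).Connected

/-- An edge is forced (for the relative demand `(s,t,3)`) if it lies in `δ_G(A)` for some
`st`-set `A` with `d_G(A) = 2`. -/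
def ForcedEdge {V : Type*} (G : SimpleGraph V) (s t : V) (e : Sym2 V) : Prop :=
  ∃ A : Set V, s ∈ A ∧ t ∉ A ∧ (delta G A).ncard = 2 ∧ e ∈ delta G A

/-!
The demand set `D` consists of the pairs of terminals (`s`, `t` and the endpoints of forced edges)
lying in a common atom, i.e. separated by no `st`-set `A` with `d_G(A) = 2`.

Such a pair `u, v` is 3-edge-connected in `G`: if `d_G(W) = 2` with `u ∈ W`, `v, s, t ∉ W`, and the
forced edge `ur` leaves the 2-cut `A ∋ u`, then `d_G(A ∩ W) ≤ 2` by submodularity, and `ur`, which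
lies in both `δ(A)` and `δ(A ∩ W)`, is missing from `δ(A \ W)`; so `A \ W` is a 2-cut separating
`v` from `u`.

If `H` satisfies the relative demand and `d_H(Z) ≤ 2` for some `Z` separating `u` from `v`, we find
a set `A` with `δ_G(A) = δ_H(Z)` splitting `s, t` as `Z` does (uncrossing the 2-cuts produced by the
relative demand from `A₁ \ Z` and `A₁ ∪ Z`, `A₁` a 2-cut at a forced edge of `u`). Then
`δ_H(A ∆ Z) = ∅`, and a set avoiding `s, t` with empty `H`-boundary contains no terminal: removing
it from a 2-cut through its forced edge would leave an `st`-set with a single `H`-edge on its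
boundary. Hence `A` separates `u` from `v` with `d_G(A) ≤ 2`, contradicting the first part.

Conversely, if the pairs of `D` are 3-edge-connected in `H` and `F` separates `s` from `t` in `H`,
the union of the atoms of the terminals still reached from `s` has its whole `G`-boundary inside
`F`, because an edge between two atoms is forced.
-/

theorem Set.eq_pair_of_subset_of_ncard_eq_two {α : Type*} {S : Set α} {a b : α}
    (h : S ⊆ {a, b}) (hS : S.ncard = 2) : S = {a, b} ∧ a ≠ b := by
  have hab : a ≠ b := by
    rintro rfl
    have := Set.ncard_le_ncard (h.trans (Set.pair_eq_singleton a).subset)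
    rw [hS, Set.ncard_singleton] at this
    omega
  exact ⟨Set.eq_of_subset_of_ncard_le h (by rw [Set.ncard_pair hab, hS]), hab⟩

theorem Set.exists_eq_pair_of_ncard_eq_two {α : Type*} {S : Set α} {a : α} (hS : S.ncard = 2)
    (ha : a ∈ S) : ∃ b, S = {a, b} := by
  obtain ⟨x, y, -, rfl⟩ := Set.ncard_eq_two.1 hS
  rcases ha with rfl | rfl
  exacts [⟨y, rfl⟩, ⟨x, Set.pair_comm _ _⟩]

theorem Set.symmDiff_pair_pair {α : Type*} {a b c : α} (hab : a ≠ b) (hac : a ≠ c) (hbc : b ≠ c) :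
    symmDiff ({a, b} : Set α) {a, c} = {b, c} := by
  ext x
  simp only [Set.mem_symmDiff, Set.mem_insert_iff, Set.mem_singleton_iff]
  constructor
  · rintro (⟨rfl | rfl, h⟩ | ⟨rfl | rfl, h⟩) <;> simp_all
  · rintro (rfl | rfl) <;> simp_all [eq_comm]

theorem Set.ncard_pair_le {α : Type*} (a b : α) : ({a, b} : Set α).ncard ≤ 2 :=
  (Set.ncard_insert_le a {b}).trans (by rw [Set.ncard_singleton])

section Boundary

variable {V : Type*} {G H : SimpleGraph V} {A B Z : Set V} {u r : V} {e : Sym2 V}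

theorem mk_mem_delta_iff {x y : V} : s(x, y) ∈ delta G A ↔ G.Adj x y ∧ (x ∈ A ↔ y ∉ A) := by
  constructor
  · rintro ⟨hxy, a, b, hab, ha, hb⟩
    refine ⟨hxy, ?_⟩
    rcases Sym2.eq_iff.1 hab with ⟨rfl, rfl⟩ | ⟨rfl, rfl⟩ <;> tauto
  · rintro ⟨hxy, hA⟩
    by_cases hx : x ∈ A
    · exact ⟨hxy, x, y, rfl, hx, hA.1 hx⟩
    · exact ⟨hxy, y, x, Sym2.eq_swap, by tauto, hx⟩

theorem delta_subset_edgeSet : delta G A ⊆ G.edgeSet := fun _ he => he.1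

theorem delta_compl : delta G Aᶜ = delta G A := by
  ext e
  induction e using Sym2.ind
  simp only [mk_mem_delta_iff, Set.mem_compl_iff]
  tauto

theorem delta_symmDiff : delta G (symmDiff A B) = symmDiff (delta G A) (delta G B) := by
  ext e
  induction e using Sym2.ind
  simp only [mk_mem_delta_iff, Set.mem_symmDiff]
  tauto

theorem delta_diff_subset : delta G (A \ B) ⊆ delta G A ∪ delta G B := by
  intro e
  induction e using Sym2.ind
  simp only [mk_mem_delta_iff, Set.mem_union, Set.mem_sdiff]
  tauto

theorem delta_union_subset : delta G (A ∪ B) ⊆ delta G A ∪ delta G B := by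
  intro e
  induction e using Sym2.ind
  simp only [mk_mem_delta_iff, Set.mem_union]
  tauto

theorem delta_inter_subset : delta G (A ∩ B) ⊆ delta G A ∪ delta G B := by
  intro e
  induction e using Sym2.ind
  simp only [mk_mem_delta_iff, Set.mem_union, Set.mem_inter_iff]
  tauto

theorem delta_inter_inter_delta_union_subset :
    delta G (A ∩ B) ∩ delta G (A ∪ B) ⊆ delta G A ∩ delta G B := by
  intro e
  induction e using Sym2.ind
  simp only [mk_mem_delta_iff, Set.mem_union, Set.mem_inter_iff]
  tauto

theorem notMem_delta_union_of_mem_delta_diff {e : Sym2 V} (hB : e ∈ delta G B)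
    (hAB : e ∈ delta G (A \ B)) : e ∉ delta G (A ∪ B) := by
  induction e using Sym2.ind
  simp only [mk_mem_delta_iff, Set.mem_union, Set.mem_sdiff] at *
  tauto

theorem delta_eq_inter_edgeSet (hHG : H ≤ G) : delta H A = delta G A ∩ H.edgeSet := by
  ext e
  induction e using Sym2.ind
  simp only [mk_mem_delta_iff, Set.mem_inter_iff, mem_edgeSet]
  exact ⟨fun h => ⟨⟨hHG h.1, h.2⟩, h.1⟩, fun h => ⟨h.2, h.1.2⟩⟩

theorem delta_mono (hHG : H ≤ G) : delta H A ⊆ delta G A :=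
  (delta_eq_inter_edgeSet hHG).subset.trans Set.inter_subset_left

theorem exists_mem_delta_of_reachable {F : Set (Sym2 V)} {a b : V}
    (h : (G.deleteEdges F).Reachable a b) (ha : a ∈ A) (hb : b ∉ A) :
    ∃ e ∈ delta G A, e ∉ F := by
  obtain ⟨p⟩ := h
  obtain ⟨d, -, hd₁, hd₂⟩ := p.exists_boundary_dart A ha hb
  obtain ⟨hadj, hF⟩ := deleteEdges_adj.1 d.adj
  exact ⟨_, mk_mem_delta_iff.2 ⟨hadj, by tauto⟩, hF⟩

theorem delta_setOf_reachable_subset (F : Set (Sym2 V)) (u : V) :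
    delta G {x | (G.deleteEdges F).Reachable u x} ⊆ F := by
  intro e he
  induction e using Sym2.ind with | _ x y => ?_
  by_contra hF
  obtain ⟨hxy, hx⟩ := mk_mem_delta_iff.1 he
  have hr : (G.deleteEdges F).Reachable x y := (deleteEdges_adj.2 ⟨hxy, hF⟩).reachable
  simp only [Set.mem_ofPred_eq] at hx
  have := (⟨fun h => h.trans hr, fun h => h.trans hr.symm⟩ :
    (G.deleteEdges F).Reachable u x ↔ (G.deleteEdges F).Reachable u y)
  tauto

theorem delta_diff_subset_insert (hHG : H ≤ G) (hA : delta G A = {s(u, r), e})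
    (hrA : r ∉ A) (huZ : u ∈ Z) :
    delta H (A \ Z) ⊆ insert e (delta H Z ∩ delta G (A \ Z)) := by
  intro g hg
  rcases delta_diff_subset hg with h | h
  · rcases hA ▸ delta_mono hHG h with rfl | rfl
    · exact absurd ((mk_mem_delta_iff.1 hg).2.2 fun h => hrA h.1) fun h => h.2 huZ
    · exact Or.inl rfl
  · exact Or.inr ⟨h, delta_mono hHG hg⟩

theorem delta_union_subset_insert (hHG : H ≤ G) (hA : delta G A = {s(u, r), e}) (huZ : u ∈ Z) :
    delta H (A ∪ Z) ⊆ insert e (delta H Z ∩ delta G (A ∪ Z)) := by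
  intro g hg
  rcases delta_union_subset hg with h | h
  · rcases hA ▸ delta_mono hHG h with rfl | rfl
    · obtain ⟨hur, hr⟩ := mk_mem_delta_iff.1 hg
      exact Or.inr ⟨mk_mem_delta_iff.2 ⟨hur, fun _ hr' => hr.1 (Or.inr huZ) (Or.inr hr'),
        fun _ => huZ⟩, delta_mono hHG hg⟩
    · exact Or.inl rfl
  · exact Or.inr ⟨h, delta_mono hHG hg⟩

end Boundary

section Atoms

variable {V : Type*} {G H : SimpleGraph V} {s t u v : V} {A : Set V}

def IsTwoCut (G : SimpleGraph V) (s t : V) (A : Set V) : Prop :=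
  s ∈ A ∧ t ∉ A ∧ (delta G A).ncard = 2

def SameAtom (G : SimpleGraph V) (s t u v : V) : Prop :=
  ∀ A, IsTwoCut G s t A → (u ∈ A ↔ v ∈ A)

def IsTerminal (G : SimpleGraph V) (s t u : V) : Prop :=
  u = s ∨ u = t ∨ ∃ e, ForcedEdge G s t e ∧ u ∈ e

def IsDemandPair (G : SimpleGraph V) (s t u v : V) : Prop :=
  IsTerminal G s t u ∧ IsTerminal G s t v ∧ SameAtom G s t u v

def SatisfiesRelDemand (G H : SimpleGraph V) (s t : V) : Prop :=
  ∀ F : Set (Sym2 V), F ⊆ G.edgeSet → F.ncard ≤ 2 →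
    (G.deleteEdges F).Reachable s t → (H.deleteEdges F).Reachable s t

def ThreeEdgeConnected (G : SimpleGraph V) (u v : V) : Prop :=
  ∀ F : Set (Sym2 V), F ⊆ G.edgeSet → F.ncard ≤ 2 → (G.deleteEdges F).Reachable u v

theorem IsTwoCut.compl (hA : IsTwoCut G s t A) : IsTwoCut G t s Aᶜ :=
  ⟨hA.2.1, not_not.2 hA.1, by rw [delta_compl]; exact hA.2.2⟩

theorem SameAtom.symm (h : SameAtom G s t u v) : SameAtom G s t v u :=
  fun A hA => (h A hA).symm

theorem SameAtom.swap (h : SameAtom G s t u v) : SameAtom G t s u v :=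
  fun A hA => not_iff_not.1 (h Aᶜ hA.compl)

theorem SameAtom.trans {w : V} (h₁ : SameAtom G s t u v) (h₂ : SameAtom G s t v w) :
    SameAtom G s t u w :=
  fun A hA => (h₁ A hA).trans (h₂ A hA)

theorem forcedEdge_of_not_sameAtom {a b : V} (hab : G.Adj a b) (h : ¬ SameAtom G s t a b) :
    ForcedEdge G s t s(a, b) := by
  simp only [SameAtom, not_forall] at h
  obtain ⟨A, ⟨hsA, htA, hA⟩, hne⟩ := h
  exact ⟨A, hsA, htA, hA, mk_mem_delta_iff.2 ⟨hab, by tauto⟩⟩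

theorem SatisfiesRelDemand.swap (h : SatisfiesRelDemand G H s t) : SatisfiesRelDemand G H t s :=
  fun F hF hc hG => (h F hF hc hG.symm).symm

theorem IsDemandPair.symm (h : IsDemandPair G s t u v) : IsDemandPair G s t v u :=
  ⟨h.2.1, h.1, h.2.2.symm⟩

theorem IsTerminal.exists_isTwoCut (hu : IsTerminal G s t u) (hus : u ≠ s) (hut : u ≠ t) :
    ∃ A r, (IsTwoCut G s t A ∨ IsTwoCut G t s A) ∧ u ∈ A ∧ s(u, r) ∈ delta G A := by
  obtain ⟨f, ⟨A, hsA, htA, hA, hfA⟩, huf⟩ := (hu.resolve_left hus).resolve_left hut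
  obtain ⟨r, rfl⟩ := Sym2.mem_iff_exists.1 huf
  by_cases huA : u ∈ A
  · exact ⟨A, r, Or.inl ⟨hsA, htA, hA⟩, huA, hfA⟩
  · exact ⟨Aᶜ, r, Or.inr (IsTwoCut.compl ⟨hsA, htA, hA⟩), huA, by rwa [delta_compl]⟩

end Atoms

section Cuts

variable {V : Type*} [Fintype V] {G H : SimpleGraph V} {s t u v r : V} {A B W X Y Z : Set V}

theorem ncard_delta_inter_add_ncard_delta_union_le :
    (delta G (A ∩ B)).ncard + (delta G (A ∪ B)).ncard ≤ (delta G A).ncard + (delta G B).ncard :=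
  calc _ = (delta G (A ∩ B) ∪ delta G (A ∪ B)).ncard + (delta G (A ∩ B) ∩ delta G (A ∪ B)).ncard :=
        (Set.ncard_union_add_ncard_inter _ _).symm
    _ ≤ (delta G A ∪ delta G B).ncard + (delta G A ∩ delta G B).ncard :=
        add_le_add (Set.ncard_le_ncard (Set.union_subset delta_inter_subset delta_union_subset))
          (Set.ncard_le_ncard delta_inter_inter_delta_union_subset)
    _ = _ := Set.ncard_union_add_ncard_inter _ _

theorem TwoEdgeConnected.two_le_ncard_delta (hG : TwoEdgeConnected G) {a b : V} (ha : a ∈ A)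
    (hb : b ∉ A) : 2 ≤ (delta G A).ncard := by
  obtain ⟨e₁, he₁, -⟩ := exists_mem_delta_of_reachable (F := ∅)
    (by rw [deleteEdges_empty]; exact hG.1.preconnected a b) ha hb
  obtain ⟨e₂, he₂, hne⟩ := exists_mem_delta_of_reachable
    ((hG.2 e₁ (delta_subset_edgeSet he₁)).preconnected a b) ha hb
  rw [← Set.ncard_pair hne]
  exact Set.ncard_le_ncard (Set.insert_subset he₂ (Set.singleton_subset_iff.2 he₁))

theorem TwoEdgeConnected.exists_isTwoCut_delta_subset (hG : TwoEdgeConnected G)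
    {F : Set (Sym2 V)} (hF : F.ncard ≤ 2) (h : ¬ (G.deleteEdges F).Reachable s t) :
    ∃ A, IsTwoCut G s t A ∧ delta G A ⊆ F := by
  have hsub := delta_setOf_reachable_subset (G := G) F s
  refine ⟨_, ⟨Reachable.refl s, h, le_antisymm ?_ ?_⟩, hsub⟩
  · exact (Set.ncard_le_ncard hsub).trans hF
  · exact hG.two_le_ncard_delta (Reachable.refl s) h

theorem threeEdgeConnected_of_three_le_ncard_delta
    (h : ∀ W, u ∈ W → v ∉ W → 3 ≤ (delta G W).ncard) : ThreeEdgeConnected G u v := by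
  intro F _ hF
  by_contra hne
  have := (h _ (Reachable.refl u) hne).trans
    (Set.ncard_le_ncard (delta_setOf_reachable_subset F u))
  omega

theorem TwoEdgeConnected.isTwoCut_of_ncard_le (hG : TwoEdgeConnected G) (hs : s ∈ A) (ht : t ∉ A)
    (hA : (delta G A).ncard ≤ 2) : IsTwoCut G s t A :=
  ⟨hs, ht, le_antisymm hA (hG.two_le_ncard_delta hs ht)⟩

theorem TwoEdgeConnected.isTwoCut_diff (hG : TwoEdgeConnected G) (hA : IsTwoCut G s t A)
    (huA : u ∈ A) (hf : s(u, r) ∈ delta G A) (huW : u ∈ W) (hsW : s ∉ W) (htW : t ∉ W)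
    (hW : (delta G W).ncard ≤ 2) : IsTwoCut G s t (A \ W) := by
  obtain ⟨hur, hr⟩ := mk_mem_delta_iff.1 hf
  have hfT : s(u, r) ∈ delta G (A ∩ W) :=
    mk_mem_delta_iff.2 ⟨hur, ⟨fun _ h => hr.1 huA h.1, fun _ => ⟨huA, huW⟩⟩⟩
  have hT : (delta G (A ∩ W)).ncard ≤ 2 := by
    have := ncard_delta_inter_add_ncard_delta_union_le (G := G) (A := A) (B := W)
    have := hG.two_le_ncard_delta (A := A ∪ W) (b := t) (Or.inl hA.1) (by simp [hA.2.1, htW])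
    have := hA.2.2
    omega
  have hsub : delta G (A \ W) ⊆ (delta G A \ {s(u, r)}) ∪ (delta G (A ∩ W) \ {s(u, r)}) := by
    intro e he
    have hne : e ≠ s(u, r) := by
      rintro rfl
      exact ((mk_mem_delta_iff.1 he).2.2 fun h => hr.1 huA h.1).2 huW
    rw [← Set.sdiff_self_inter] at he
    rcases delta_diff_subset he with h | h
    exacts [Or.inl ⟨h, hne⟩, Or.inr ⟨h, hne⟩]
  refine hG.isTwoCut_of_ncard_le ⟨hA.1, hsW⟩ (fun h => hA.2.1 h.1) ?_
  calc (delta G (A \ W)).ncard ≤ (delta G A \ {s(u, r)}).ncard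
        + (delta G (A ∩ W) \ {s(u, r)}).ncard :=
        (Set.ncard_le_ncard hsub).trans (Set.ncard_union_le _ _)
    _ ≤ 2 := by
        rw [Set.ncard_sdiff_singleton_of_mem hf, Set.ncard_sdiff_singleton_of_mem hfT, hA.2.2]
        omega

theorem TwoEdgeConnected.three_le_ncard_delta_of_sameAtom (hG : TwoEdgeConnected G)
    (hu : IsTerminal G s t u) (huv : SameAtom G s t u v) (huW : u ∈ W) (hvW : v ∉ W)
    (hsW : s ∉ W) (htW : t ∉ W) : 3 ≤ (delta G W).ncard := by
  by_contra! hW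
  obtain ⟨A, r, hA | hA, huA, hf⟩ :=
    hu.exists_isTwoCut (fun h => hsW (h ▸ huW)) (fun h => htW (h ▸ huW))
  · have hX := hG.isTwoCut_diff hA huA hf huW hsW htW (by omega)
    exact ((huv _ hX).2 ⟨(huv A hA).1 huA, hvW⟩).2 huW
  · have hX := hG.isTwoCut_diff hA huA hf huW htW hsW (by omega)
    exact ((huv.swap _ hX).2 ⟨(huv.swap A hA).1 huA, hvW⟩).2 huW

theorem TwoEdgeConnected.three_le_ncard_delta_of_isDemandPair (hG : TwoEdgeConnected G)
    (h : IsDemandPair G s t u v) (huW : u ∈ W) (hvW : v ∉ W) : 3 ≤ (delta G W).ncard := by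
  obtain ⟨hu, hv, huv⟩ := h
  by_cases hs : s ∈ W <;> by_cases ht : t ∈ W
  · rw [← delta_compl]
    exact hG.three_le_ncard_delta_of_sameAtom hv huv.symm hvW (not_not.2 huW)
      (not_not.2 hs) (not_not.2 ht)
  · by_contra! hW
    exact hvW ((huv W (hG.isTwoCut_of_ncard_le hs ht (by omega))).1 huW)
  · by_contra! hW
    have hA : IsTwoCut G s t Wᶜ := hG.isTwoCut_of_ncard_le hs (not_not.2 ht)
      (by rw [delta_compl]; omega)
    exact ((huv Wᶜ hA).2 hvW) huW
  · exact hG.three_le_ncard_delta_of_sameAtom hu huv huW hvW hs ht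

theorem SatisfiesRelDemand.exists_isTwoCut_delta_subset (hL : SatisfiesRelDemand G H s t)
    (hG : TwoEdgeConnected G) (hs : s ∈ X) (ht : t ∉ X) {F : Set (Sym2 V)} (hFG : F ⊆ G.edgeSet)
    (hF : F.ncard ≤ 2) (hX : delta H X ⊆ F) : ∃ A, IsTwoCut G s t A ∧ delta G A ⊆ F := by
  by_contra h
  have hGst : (G.deleteEdges F).Reachable s t := by
    by_contra h'
    exact h (hG.exists_isTwoCut_delta_subset hF h')
  obtain ⟨e, he, heF⟩ := exists_mem_delta_of_reachable (hL F hFG hF hGst) hs ht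
  exact heF (hX he)

theorem SatisfiesRelDemand.two_le_ncard_delta (hL : SatisfiesRelDemand G H s t)
    (hG : TwoEdgeConnected G) (hHG : H ≤ G) (hs : s ∈ X) (ht : t ∉ X) :
    2 ≤ (delta H X).ncard := by
  by_contra! h
  obtain ⟨A, hA, hAX⟩ := hL.exists_isTwoCut_delta_subset hG hs ht
    (delta_subset_edgeSet.trans (edgeSet_mono hHG)) (by omega) subset_rfl
  have := Set.ncard_le_ncard hAX
  rw [hA.2.2] at this
  omega

theorem SatisfiesRelDemand.exists_isTwoCut_delta_eq (hL : SatisfiesRelDemand G H s t)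
    (hG : TwoEdgeConnected G) (hHG : H ≤ G) (hs : s ∈ X) (ht : t ∉ X)
    (hX : (delta H X).ncard ≤ 2) : ∃ A, IsTwoCut G s t A ∧ delta G A = delta H X := by
  obtain ⟨A, hA, hAX⟩ := hL.exists_isTwoCut_delta_subset hG hs ht
    (delta_subset_edgeSet.trans (edgeSet_mono hHG)) hX subset_rfl
  exact ⟨A, hA, Set.eq_of_subset_of_ncard_le hAX (by rw [hA.2.2]; exact hX)⟩

theorem SatisfiesRelDemand.not_isTerminal_of_delta_eq_empty (hL : SatisfiesRelDemand G H s t)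
    (hG : TwoEdgeConnected G) (hHG : H ≤ G) (hforced : ∀ e, ForcedEdge G s t e → e ∈ H.edgeSet)
    (hsY : s ∉ Y) (htY : t ∉ Y) (hY : delta H Y = ∅) {y : V} (hyY : y ∈ Y) :
    ¬ IsTerminal G s t y := by
  intro hy
  obtain ⟨f, ⟨A, hsA, htA, hA, hfA⟩, hyf⟩ :=
    (hy.resolve_left fun h => hsY (h ▸ hyY)).resolve_left fun h => htY (h ▸ hyY)
  obtain ⟨r, rfl⟩ := Sym2.mem_iff_exists.1 hyf
  have hrY : r ∈ Y := by
    by_contra hrY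
    have : s(y, r) ∈ delta H Y :=
      mk_mem_delta_iff.2 ⟨hforced _ ⟨A, hsA, htA, hA, hfA⟩, fun _ => hrY, fun _ => hyY⟩
    simp [hY] at this
  have hsub : delta H (A \ Y) ⊆ delta G A \ {s(y, r)} := by
    intro e he
    rcases delta_diff_subset he with h | h
    · refine ⟨delta_mono hHG h, ?_⟩
      rintro rfl
      exact ((mk_mem_delta_iff.1 he).2.2 fun h => h.2 hrY).2 hyY
    · simp [hY] at h
  have h₁ := Set.ncard_le_ncard hsub
  have h₂ := hL.two_le_ncard_delta hG hHG (X := A \ Y) ⟨hsA, hsY⟩ fun h => htA h.1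
  rw [Set.ncard_sdiff_singleton_of_mem hfA, hA] at h₁
  omega

theorem SatisfiesRelDemand.nonempty_of_delta_subset_insert (hL : SatisfiesRelDemand G H s t)
    (hG : TwoEdgeConnected G) (hHG : H ≤ G) (hs : s ∈ X) (ht : t ∉ X) {e : Sym2 V}
    {S : Set (Sym2 V)} (hX : delta H X ⊆ insert e S) : S.Nonempty := by
  by_contra! hS
  have h₁ := Set.ncard_le_ncard (t := {e}) fun g hg =>
    (hX hg).resolve_right (hS ▸ Set.notMem_empty g)
  have h₂ := hL.two_le_ncard_delta hG hHG hs ht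
  rw [Set.ncard_singleton] at h₁
  omega

theorem SatisfiesRelDemand.exists_delta_eq_pair (hL : SatisfiesRelDemand G H s t)
    (hG : TwoEdgeConnected G) (hs : s ∈ X) (ht : t ∉ X) {e b : Sym2 V} (he : e ∈ G.edgeSet)
    (hb : b ∈ G.edgeSet) (hX : delta H X ⊆ {e, b}) :
    ∃ A, s ∈ A ∧ t ∉ A ∧ delta G A = {e, b} ∧ e ≠ b := by
  obtain ⟨A, hA, hAX⟩ := hL.exists_isTwoCut_delta_subset hG hs ht
    (Set.insert_subset he (Set.singleton_subset_iff.2 hb)) (Set.ncard_pair_le _ _) hX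
  exact ⟨A, hA.1, hA.2.1, Set.eq_pair_of_subset_of_ncard_eq_two hAX hA.2.2⟩

-- Write `δ_G(A) = {s(u, r), e}` and `δ_H(Z) = {b, b'}`, with `b` leaving `A \ Z` and `b'` leaving
-- `A ∪ Z`. The relative demand makes `{e, b}` and `{e, b'}` the boundaries of 2-cuts `C₁`, `C₂`,
-- and `M = C₁ ∆ C₂` has boundary `{b, b'}`.
theorem SatisfiesRelDemand.exists_delta_eq_of_mem_isTwoCut (hL : SatisfiesRelDemand G H s t)
    (hG : TwoEdgeConnected G) (hHG : H ≤ G) (hA : IsTwoCut G s t A) (huA : u ∈ A)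
    (hf : s(u, r) ∈ delta G A) (huZ : u ∈ Z) (hsZ : s ∉ Z) (htZ : t ∉ Z)
    (hZ : (delta H Z).ncard ≤ 2) : ∃ M, s ∉ M ∧ t ∉ M ∧ delta G M = delta H Z := by
  have hrA : r ∉ A := (mk_mem_delta_iff.1 hf).2.1 huA
  obtain ⟨e, hAe⟩ := Set.exists_eq_pair_of_ncard_eq_two hA.2.2 hf
  have heG : e ∈ G.edgeSet :=
    delta_subset_edgeSet (by rw [hAe]; exact Set.mem_insert_of_mem _ rfl : e ∈ delta G A)
  have hZG : delta H Z ⊆ G.edgeSet := delta_subset_edgeSet.trans (edgeSet_mono hHG)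
  have hin := delta_diff_subset_insert hHG hAe hrA huZ
  have hout := delta_union_subset_insert hHG hAe huZ
  obtain ⟨b, hbZ, hbA⟩ := hL.nonempty_of_delta_subset_insert hG hHG (X := A \ Z) ⟨hA.1, hsZ⟩
    (fun h => hA.2.1 h.1) hin
  obtain ⟨b', hb'Z, hb'A⟩ := hL.nonempty_of_delta_subset_insert hG hHG (X := A ∪ Z) (Or.inl hA.1)
    (fun h => h.elim hA.2.1 htZ) hout
  have hb'A' : b' ∉ delta G (A \ Z) := fun h =>
    notMem_delta_union_of_mem_delta_diff (delta_mono hHG hb'Z) h hb'A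
  have hbA' : b ∉ delta G (A ∪ Z) := notMem_delta_union_of_mem_delta_diff (delta_mono hHG hbZ) hbA
  have hbb' : b ≠ b' := by rintro rfl; exact hb'A' hbA
  have hZbb' : delta H Z = {b, b'} := (Set.eq_of_subset_of_ncard_le
    (Set.insert_subset hbZ (Set.singleton_subset_iff.2 hb'Z))
    (by rw [Set.ncard_pair hbb']; exact hZ)).symm
  obtain ⟨C₁, hsC₁, htC₁, hC₁, heb⟩ := hL.exists_delta_eq_pair hG (X := A \ Z) ⟨hA.1, hsZ⟩
    (fun h => hA.2.1 h.1) heG (hZG hbZ) fun g hg => by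
      rcases hin hg with rfl | ⟨hgZ, hgA⟩
      · exact Or.inl rfl
      · rcases hZbb' ▸ hgZ with rfl | rfl
        exacts [Or.inr rfl, absurd hgA hb'A']
  obtain ⟨C₂, hsC₂, htC₂, hC₂, heb'⟩ := hL.exists_delta_eq_pair hG (X := A ∪ Z) (Or.inl hA.1)
    (fun h => h.elim hA.2.1 htZ) heG (hZG hb'Z) fun g hg => by
      rcases hout hg with rfl | ⟨hgZ, hgA⟩
      · exact Or.inl rfl
      · rcases hZbb' ▸ hgZ with rfl | rfl
        exacts [absurd hgA hbA', Or.inr rfl]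
  refine ⟨symmDiff C₁ C₂, by simp [Set.mem_symmDiff, hsC₁, hsC₂],
    by simp [Set.mem_symmDiff, htC₁, htC₂], ?_⟩
  rw [delta_symmDiff, hC₁, hC₂, hZbb', Set.symmDiff_pair_pair heb heb' hbb']

theorem SatisfiesRelDemand.exists_delta_eq_of_isTerminal (hL : SatisfiesRelDemand G H s t)
    (hG : TwoEdgeConnected G) (hHG : H ≤ G) (hu : IsTerminal G s t u) (huZ : u ∈ Z)
    (hsZ : s ∉ Z) (htZ : t ∉ Z) (hZ : (delta H Z).ncard ≤ 2) :
    ∃ M, s ∉ M ∧ t ∉ M ∧ delta G M = delta H Z := by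
  obtain ⟨A, r, hA | hA, huA, hf⟩ :=
    hu.exists_isTwoCut (fun h => hsZ (h ▸ huZ)) (fun h => htZ (h ▸ huZ))
  · exact hL.exists_delta_eq_of_mem_isTwoCut hG hHG hA huA hf huZ hsZ htZ hZ
  · obtain ⟨M, htM, hsM, hM⟩ :=
      hL.swap.exists_delta_eq_of_mem_isTwoCut hG hHG hA huA hf huZ htZ hsZ hZ
    exact ⟨M, hsM, htM, hM⟩

theorem SatisfiesRelDemand.exists_delta_eq_of_isDemandPair (hL : SatisfiesRelDemand G H s t)
    (hG : TwoEdgeConnected G) (hHG : H ≤ G) (h : IsDemandPair G s t u v) (huZ : u ∈ Z)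
    (hvZ : v ∉ Z) (hZ : (delta H Z).ncard ≤ 2) :
    ∃ A, (s ∈ A ↔ s ∈ Z) ∧ (t ∈ A ↔ t ∈ Z) ∧ delta G A = delta H Z := by
  by_cases hs : s ∈ Z <;> by_cases ht : t ∈ Z
  · obtain ⟨M, hsM, htM, hM⟩ := hL.exists_delta_eq_of_isTerminal hG hHG h.2.1 (Z := Zᶜ) hvZ
      (not_not.2 hs) (not_not.2 ht) (by rwa [delta_compl])
    exact ⟨Mᶜ, by simp [hsM, hs], by simp [htM, ht], by rw [delta_compl, hM, delta_compl]⟩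
  · obtain ⟨A, hA, hAZ⟩ := hL.exists_isTwoCut_delta_eq hG hHG hs ht hZ
    exact ⟨A, by simp [hA.1, hs], by simp [hA.2.1, ht], hAZ⟩
  · obtain ⟨A, hA, hAZ⟩ := hL.exists_isTwoCut_delta_eq hG hHG (X := Zᶜ) hs (not_not.2 ht)
      (by rwa [delta_compl])
    exact ⟨Aᶜ, by simp [hA.1, hs], by simp [hA.2.1, ht], by rw [delta_compl, hAZ, delta_compl]⟩
  · obtain ⟨M, hsM, htM, hM⟩ := hL.exists_delta_eq_of_isTerminal hG hHG h.1 huZ hs ht hZ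
    exact ⟨M, by simp [hsM, hs], by simp [htM, ht], hM⟩

theorem SatisfiesRelDemand.three_le_ncard_delta (hL : SatisfiesRelDemand G H s t)
    (hG : TwoEdgeConnected G) (hHG : H ≤ G) (hforced : ∀ e, ForcedEdge G s t e → e ∈ H.edgeSet)
    (h : IsDemandPair G s t u v) (huZ : u ∈ Z) (hvZ : v ∉ Z) : 3 ≤ (delta H Z).ncard := by
  by_contra! hZ
  obtain ⟨A, hsA, htA, hA⟩ :=
    hL.exists_delta_eq_of_isDemandPair hG hHG h huZ hvZ (Nat.lt_succ_iff.1 hZ)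
  -- `A ∆ Z` has no boundary in `H` and avoids `s` and `t`, so it contains no terminal.
  have hY : delta H (symmDiff A Z) = ∅ := by
    rw [delta_symmDiff, delta_eq_inter_edgeSet hHG, hA,
      Set.inter_eq_left.2 delta_subset_edgeSet, symmDiff_self]
    rfl
  have hsY : s ∉ symmDiff A Z := by simp [Set.mem_symmDiff, hsA]
  have htY : t ∉ symmDiff A Z := by simp [Set.mem_symmDiff, htA]
  have huA : u ∈ A := by
    by_contra huA
    exact hL.not_isTerminal_of_delta_eq_empty hG hHG hforced hsY htY hY (Or.inr ⟨huZ, huA⟩) h.1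
  have hvA : v ∉ A := fun hvA =>
    hL.not_isTerminal_of_delta_eq_empty hG hHG hforced hsY htY hY (Or.inl ⟨hvA, hvZ⟩) h.2.1
  have := hG.three_le_ncard_delta_of_isDemandPair h huA hvA
  rw [hA] at this
  omega

theorem satisfiesRelDemand_of_threeEdgeConnected
    (hforced : ∀ e, ForcedEdge G s t e → e ∈ H.edgeSet)
    (hD : ∀ u v, IsDemandPair G s t u v → ThreeEdgeConnected H u v) :
    SatisfiesRelDemand G H s t := by
  intro F _ hF hGst
  by_contra hH
  have hreach : ∀ {u v}, IsDemandPair G s t u v → (H.deleteEdges F).Reachable u v := fun huv => by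
    rw [deleteEdges_eq_inter_edgeSet]
    exact hD _ _ huv _ Set.inter_subset_right
      ((Set.ncard_le_ncard Set.inter_subset_left).trans hF)
  -- the atoms of the terminals that `s` still reaches in `H \ F`
  set X := {x | ∃ w, IsTerminal G s t w ∧ SameAtom G s t x w ∧ (H.deleteEdges F).Reachable s w}
  have hsX : s ∈ X := ⟨s, Or.inl rfl, fun _ _ => Iff.rfl, Reachable.refl s⟩
  have htX : t ∉ X := fun ⟨w, hw, htw, hsw⟩ =>
    hH (hsw.trans (hreach ⟨hw, Or.inr (Or.inl rfl), htw.symm⟩))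
  obtain ⟨e, ⟨he, a, b, rfl, ⟨w, hw, haw, hsw⟩, hbX⟩, heF⟩ :=
    exists_mem_delta_of_reachable hGst hsX htX
  have hf := forcedEdge_of_not_sameAtom he fun hab => hbX ⟨w, hw, hab.symm.trans haw, hsw⟩
  have hsa : (H.deleteEdges F).Reachable s a :=
    hsw.trans (hreach ⟨hw, Or.inr (Or.inr ⟨_, hf, Sym2.mem_mk_left a b⟩), haw.symm⟩)
  exact hbX ⟨b, Or.inr (Or.inr ⟨_, hf, Sym2.mem_mk_right a b⟩), fun _ _ => Iff.rfl,
    hsa.trans (deleteEdges_adj.2 ⟨hforced _ hf, heF⟩).reachable⟩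

end Cuts

theorem stmt_0_general {V : Type*} [Fintype V] (G : SimpleGraph V) (s t : V)
    (h2ec : TwoEdgeConnected G) :
    ∃ D : Finset (Sym2 V),
      -- (i) every pair in D is an ordinary 3-demand
      (∀ u v : V, s(u, v) ∈ D →
        ∀ F : Set (Sym2 V), F ⊆ G.edgeSet → F.ncard ≤ 2 →
          (G.deleteEdges F).Reachable u v) ∧
      -- (ii) for every spanning subgraph H of G containing all forced edges,
      -- H satisfies the relative demand (s,t,3) iff H satisfies all demands in D
      (∀ H : SimpleGraph V, H ≤ G →
        (∀ e : Sym2 V, ForcedEdge G s t e → e ∈ H.edgeSet) →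
        ((∀ F : Set (Sym2 V), F ⊆ G.edgeSet → F.ncard ≤ 2 →
            (G.deleteEdges F).Reachable s t → (H.deleteEdges F).Reachable s t)
          ↔
         (∀ u v : V, s(u, v) ∈ D →
            ∀ F : Set (Sym2 V), F ⊆ H.edgeSet → F.ncard ≤ 2 →
              (H.deleteEdges F).Reachable u v))) := by
  let D := Sym2.fromRel (r := IsDemandPair G s t) ⟨fun _ _ h => h.symm⟩
  have hD : ∀ {u v}, s(u, v) ∈ D.toFinite.toFinset ↔ IsDemandPair G s t u v := by
    simp [D, Sym2.fromRel_prop]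
  refine ⟨D.toFinite.toFinset, fun u v huv => ?_, fun H hHG hforced => ⟨fun hL u v huv => ?_,
    fun hH => satisfiesRelDemand_of_threeEdgeConnected hforced fun u v huv => hH u v (hD.2 huv)⟩⟩
  · exact threeEdgeConnected_of_three_le_ncard_delta fun W hu hv =>
      h2ec.three_le_ncard_delta_of_isDemandPair (hD.1 huv) hu hv
  · exact threeEdgeConnected_of_three_le_ncard_delta fun W hu hv =>
      SatisfiesRelDemand.three_le_ncard_delta hL h2ec hHG hforced (hD.1 huv) hu hv

theorem stmt_0 {V : Type*} [Fintype V] (G : SimpleGraph V) (s t : V)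
    (hst : s ≠ t) (h2ec : TwoEdgeConnected G) :
    ∃ D : Finset (Sym2 V),
      -- (i) every pair in D is an ordinary 3-demand
      (∀ u v : V, s(u, v) ∈ D →
        ∀ F : Set (Sym2 V), F ⊆ G.edgeSet → F.ncard ≤ 2 →
          (G.deleteEdges F).Reachable u v) ∧
      -- (ii) for every spanning subgraph H of G containing all forced edges,
      -- H satisfies the relative demand (s,t,3) iff H satisfies all demands in D
      (∀ H : SimpleGraph V, H ≤ G →
        (∀ e : Sym2 V, ForcedEdge G s t e → e ∈ H.edgeSet) →
        ((∀ F : Set (Sym2 V), F ⊆ G.edgeSet → F.ncard ≤ 2 →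
            (G.deleteEdges F).Reachable s t → (H.deleteEdges F).Reachable s t)
          ↔
         (∀ u v : V, s(u, v) ∈ D →
            ∀ F : Set (Sym2 V), F ⊆ H.edgeSet → F.ncard ≤ 2 →
              (H.deleteEdges F).Reachable u v))) :=
  stmt_0_general G s t h2ec
end

section
/- Let G = (V,E) be a finite connected undirected graph, let s,t ∈ V be distinct, let k ≥ 1, and let H be a spanning subgraph of G. Then H satisfies the relative demand (s,t,k) if and only if for every G-minimal st-set A, d_H(A) ≥ min{k, d_G(A)}. -/
open SimpleGraph

/-- If an edge of `G` joins `u ∈ A` to `v ∉ A`, it is in `delta G A`. -/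
lemma mem_delta_of_adj {V : Type*} {G : SimpleGraph V} {A : Set V} {u v : V}
    (h : G.Adj u v) (hu : u ∈ A) (hv : v ∉ A) : s(u, v) ∈ delta G A :=
  ⟨G.mem_edgeSet.2 h, u, v, rfl, hu, hv⟩

/-- If a graph has no adjacent pair leaving `A`, reachability stays in `A`. -/
lemma reach_stay {V : Type*} {G' : SimpleGraph V} {A : Set V}
    (h : ∀ ⦃u v : V⦄, G'.Adj u v → u ∈ A → v ∈ A) {x y : V}
    (hr : G'.Reachable x y) (hx : x ∈ A) : y ∈ A := by
  obtain ⟨w⟩ := hr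
  induction w with
  | nil => exact hx
  | cons h' _ ih => exact ih (h h' hx)

/-- Deleting a superset of the crossing edges prevents escape from `A`. -/
lemma stay_of_delta_subset {V : Type*} {G' : SimpleGraph V} {A : Set V}
    {F : Set (Sym2 V)} (hsub : delta G' A ⊆ F) ⦃u v : V⦄
    (h : (G'.deleteEdges F).Adj u v) (hu : u ∈ A) : v ∈ A := by
  by_contra hv
  exact (SimpleGraph.deleteEdges_adj.1 h).2
    (hsub (mem_delta_of_adj (SimpleGraph.deleteEdges_adj.1 h).1 hu hv))

theorem stmt_1 {V : Type*} [Fintype V] (G : SimpleGraph V) (hG : G.Connected)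
    (s t : V) (hst : s ≠ t) (k : ℕ) (hk : 1 ≤ k)
    (H : SimpleGraph V) (hH : H ≤ G) :
    -- H satisfies the relative demand (s,t,k)
    (∀ F : Set (Sym2 V), F ⊆ G.edgeSet → F.ncard ≤ k - 1 →
        (G.deleteEdges F).Reachable s t → (H.deleteEdges F).Reachable s t)
    ↔
    -- iff for every G-minimal st-set A, d_H(A) ≥ min k (d_G(A))
    (∀ A : Set V, s ∈ A → t ∉ A →
      (∀ X : Set (Sym2 V), X ⊂ delta G A → (G.deleteEdges X).Reachable s t) →
      min k (delta G A).ncard ≤ (delta H A).ncard) := by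
  classical
  have hHG : ∀ (A : Set V), delta H A ⊆ delta G A := by
    rintro A e ⟨he, u, v, rfl, hu, hv⟩
    exact ⟨SimpleGraph.edgeSet_mono hH he, u, v, rfl, hu, hv⟩
  constructor
  · -- forward direction
    intro hdem A hs ht hmin
    by_contra hlt
    push_neg at hlt
    set F : Set (Sym2 V) := delta H A with hF
    have hFsub : F ⊆ G.edgeSet := fun e he => SimpleGraph.edgeSet_mono hH he.1
    have hFk : F.ncard ≤ k - 1 := by
      have := lt_of_lt_of_le hlt (min_le_left _ _)
      omega
    have hFss : F ⊂ delta G A := by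
      refine (hHG A).ssubset_of_ne ?_
      intro hEq
      have := lt_of_lt_of_le hlt (min_le_right _ _)
      rw [hF, hEq] at this
      exact lt_irrefl _ this
    have hreach := hdem F hFsub hFk (hmin F hFss)
    exact ht (reach_stay (stay_of_delta_subset subset_rfl) hreach hs)
  · -- backward direction
    intro hcut F hFsub hFk hreachG
    by_contra hnot
    set A : Set V := {v | (H.deleteEdges F).Reachable s v} with hA
    have hs : s ∈ A := Reachable.refl s
    have ht : t ∉ A := hnot
    have hHAF : delta H A ⊆ F := by
      rintro e ⟨he, u, v, rfl, hu, hv⟩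
      by_contra heF
      exact hv (hu.trans (SimpleGraph.deleteEdges_adj.2 ⟨H.mem_edgeSet.1 he, heF⟩).reachable)
    -- δ_G(A) is an st-cut
    have hcutA : ¬ (G.deleteEdges (delta G A)).Reachable s t := fun hr =>
      ht (reach_stay (stay_of_delta_subset subset_rfl) hr hs)
    -- pick a cardinality-minimal st-cut X ⊆ δ_G(A)
    have hex : ∃ n : ℕ, ∃ X : Set (Sym2 V), X ⊆ delta G A ∧
        ¬ (G.deleteEdges X).Reachable s t ∧ X.ncard = n :=
      ⟨(delta G A).ncard, delta G A, subset_rfl, hcutA, rfl⟩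
    obtain ⟨X, hXsub, hXcut, hXcard⟩ := Nat.find_spec hex
    have hXmin : ∀ m < Nat.find hex, ¬ ∃ X : Set (Sym2 V), X ⊆ delta G A ∧
        ¬ (G.deleteEdges X).Reachable s t ∧ X.ncard = m := fun m hm => Nat.find_min hex hm
    set A' : Set V := {v | (G.deleteEdges X).Reachable s v} with hA'
    have hs' : s ∈ A' := Reachable.refl s
    have ht' : t ∉ A' := hXcut
    have hA'X : delta G A' ⊆ X := by
      rintro e ⟨he, u, v, rfl, hu, hv⟩
      by_contra heX
      exact hv (hu.trans (SimpleGraph.deleteEdges_adj.2 ⟨G.mem_edgeSet.1 he, heX⟩).reachable)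
    have hcutA' : ¬ (G.deleteEdges (delta G A')).Reachable s t := fun hr =>
      ht' (reach_stay (stay_of_delta_subset subset_rfl) hr hs')
    -- δ_G(A') = X
    have hXA' : delta G A' = X := by
      refine Set.eq_of_subset_of_ncard_le hA'X ?_ (Set.toFinite _)
      rw [hXcard]
      by_contra hltn
      push_neg at hltn
      exact hXmin _ hltn ⟨delta G A', hA'X.trans hXsub, hcutA', rfl⟩
    -- A' is G-minimal
    have hmin' : ∀ Y : Set (Sym2 V), Y ⊂ delta G A' → (G.deleteEdges Y).Reachable s t := by
      intro Y hY
      by_contra hYcut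
      have hYlt : Y.ncard < Nat.find hex := by
        rw [← hXcard, ← hXA']
        exact Set.ncard_lt_ncard hY (Set.toFinite _)
      exact hXmin _ hYlt ⟨Y, hY.subset.trans (hXA'.subset.trans hXsub), hYcut, rfl⟩
    have hkey := hcut A' hs' ht' hmin'
    -- δ_H(A') ⊆ F
    have hHA'F : delta H A' ⊆ F := by
      rintro e ⟨he, u, v, rfl, hu, hv⟩
      have heG : s(u, v) ∈ delta G A' := ⟨SimpleGraph.edgeSet_mono hH he, u, v, rfl, hu, hv⟩
      have heX : s(u, v) ∈ X := hXA' ▸ heG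
      obtain ⟨-, a, b, hab, ha, hb⟩ := hXsub heX
      exact hHAF ⟨he, a, b, hab, ha, hb⟩
    have hcard : (delta H A').ncard < k := by
      have h1 : (delta H A').ncard ≤ F.ncard :=
        Set.ncard_le_ncard hHA'F (Set.toFinite _)
      omega
    have hle : (delta G A').ncard ≤ (delta H A').ncard := by
      rcases le_total k (delta G A').ncard with h | h
      · rw [min_eq_left h] at hkey; omega
      · rw [min_eq_right h] at hkey; exact hkey
    have hEq : delta H A' = delta G A' :=
      Set.eq_of_subset_of_ncard_le (hHG A') hle (Set.toFinite _)
    -- then δ_G(A') ⊆ F, contradicting reachability in G \ F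
    have hGA'F : delta G A' ⊆ F := hEq ▸ hHA'F
    exact ht' (reach_stay (stay_of_delta_subset hGA'F) hreachG hs')
end

section
/- Let J be an instance graph with properties (A) and (B), and let H be a spanning subgraph of J containing the four forced edges sx, sy, zt, wt. If H is a feasible solution (i.e., H satisfies the relative demand (s,t,3) on J), then R = {x,y,z,w} is a 3-edge-connected subset of H: for all u,v ∈ R and every F ⊆ E(H) with |F| ≤ 2, u and v are connected in H∖F. -/
open SimpleGraph

/-- Chop the first edge off a path. -/
lemma chop {V : Type*} {G : SimpleGraph V} {a b : V} (p : G.Walk a b) (hp : p.IsPath)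
    (hab : a ≠ b) :
    ∃ (c : V) (r : G.Walk c b), G.Adj a c ∧ r.IsPath ∧ (∀ e ∈ r.edges, a ∉ e) ∧
      (∀ e ∈ r.edges, e ∈ p.edges) := by
  cases p with
  | nil => exact absurd rfl hab
  | cons h q =>
    rw [SimpleGraph.Walk.cons_isPath_iff] at hp
    refine ⟨_, q, h, hp.1, ?_, ?_⟩
    · intro e he hae
      induction e with
      | h u v =>
        rcases Sym2.mem_iff.mp hae with rfl | rfl
        · exact hp.2 (q.fst_mem_support_of_mem_edges he)
        · exact hp.2 (q.snd_mem_support_of_mem_edges he)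
    · intro e he
      simp [he]

/-- If there is a walk from inside `A` to outside `A`, some edge crosses `A`. -/
lemma exists_crossing {V : Type*} {G : SimpleGraph V} {a b : V} (p : G.Walk a b)
    (A : Set V) (ha : a ∈ A) (hb : b ∉ A) :
    ∃ u v, G.Adj u v ∧ u ∈ A ∧ v ∉ A := by
  induction p with
  | nil => exact absurd ha hb
  | @cons u c b h q ih =>
    by_cases hc : c ∈ A
    · exact ih hc hb
    · exact ⟨u, c, h, ha, hc⟩

lemma cut_lemma {V : Type*} [Fintype V] (J : SimpleGraph V) (s t x y z w : V)
    (hst : s ≠ t) (h2ec : TwoEdgeConnected J)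
    (hNs : J.neighborSet s = {x, y}) (hNt : J.neighborSet t = {z, w})
    (hB : ∀ A : Set V, s ∈ A → t ∉ A → (delta J A).ncard = 2 →
      A = {s} ∨ A = ({t} : Set V)ᶜ) :
    ∀ F : Set (Sym2 V), F ⊆ J.edgeSet → F.ncard ≤ 2 →
      ¬ (s(s,x) ∈ F ∧ s(s,y) ∈ F) → ¬ (s(z,t) ∈ F ∧ s(w,t) ∈ F) →
      (J.deleteEdges F).Reachable s t := by
  intro F hFJ hFc hFs hFt
  by_contra hreach
  set A : Set V := {v | (J.deleteEdges F).Reachable s v} with hA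
  have hsA : s ∈ A := Set.mem_setOf.mpr (Reachable.refl s)
  have htA : t ∉ A := hreach
  -- delta J A ⊆ F
  have hdel : delta J A ⊆ F := by
    rintro e ⟨heJ, u, v, rfl, hu, hv⟩
    by_contra heF
    have : (J.deleteEdges F).Adj u v := by
      rw [SimpleGraph.deleteEdges_adj]
      exact ⟨heJ, heF⟩
    exact hv (hu.trans this.reachable)
  -- cross edges into delta
  have hmem : ∀ u v : V, J.Adj u v → u ∈ A → v ∉ A → s(u,v) ∈ delta J A := by
    intro u v huv hu hv
    exact ⟨huv, u, v, rfl, hu, hv⟩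
  -- first crossing edge from connectivity
  obtain ⟨u1, v1, h1, hu1, hv1⟩ := exists_crossing ((h2ec.1.preconnected s t).some) A hsA htA
  -- second crossing edge from 2-edge-connectivity
  have he1 : s(u1, v1) ∈ J.edgeSet := h1
  obtain ⟨u2, v2, h2, hu2, hv2⟩ :=
    exists_crossing (((h2ec.2 _ he1).preconnected s t).some) A hsA htA
  have h2' : J.Adj u2 v2 ∧ s(u2, v2) ∉ ({s(u1,v1)} : Set (Sym2 V)) := by
    rw [← SimpleGraph.deleteEdges_adj]; exact h2
  have hcard : (delta J A).ncard = 2 := by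
    have hle : (delta J A).ncard ≤ 2 :=
      le_trans (Set.ncard_le_ncard hdel (Set.toFinite F)) hFc
    have hlt : 1 < (delta J A).ncard := by
      rw [Set.one_lt_ncard_iff (Set.toFinite _)]
      exact ⟨s(u1,v1), s(u2,v2), hmem _ _ h1 hu1 hv1, hmem _ _ h2'.1 hu2 hv2,
        fun h => h2'.2 (by simp [← h])⟩
    omega
  -- now apply hB
  have hJx : J.Adj s x := by
    have hx : x ∈ J.neighborSet s := by rw [hNs]; exact Set.mem_insert _ _
    exact hx
  have hJy : J.Adj s y := by
    have hx : y ∈ J.neighborSet s := by rw [hNs]; exact Set.mem_insert_of_mem _ rfl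
    exact hx
  have hJz : J.Adj t z := by
    have hx : z ∈ J.neighborSet t := by rw [hNt]; exact Set.mem_insert _ _
    exact hx
  have hJw : J.Adj t w := by
    have hx : w ∈ J.neighborSet t := by rw [hNt]; exact Set.mem_insert_of_mem _ rfl
    exact hx
  have hxs : x ≠ s := fun h => J.irrefl (h ▸ hJx)
  have hys : y ≠ s := fun h => J.irrefl (h ▸ hJy)
  have hzt' : z ≠ t := fun h => J.irrefl (h ▸ hJz)
  have hwt' : w ≠ t := fun h => J.irrefl (h ▸ hJw)
  rcases hB A hsA htA hcard with hAe | hAe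
  · exact hFs ⟨hdel (hmem s x hJx hsA (by rw [hAe]; simpa using hxs)),
      hdel (hmem s y hJy hsA (by rw [hAe]; simpa using hys))⟩
  · exact hFt ⟨hdel (hmem z t hJz.symm (by rw [hAe]; simpa using hzt') (by rw [hAe]; simp)),
      hdel (hmem w t hJw.symm (by rw [hAe]; simpa using hwt') (by rw [hAe]; simp))⟩

lemma extract_lemma {V : Type*} [Fintype V] (J H : SimpleGraph V) (s t x y z w : V)
    (hst : s ≠ t) (htx : t ≠ x) (hty : t ≠ y)
    (hH : H ≤ J)
    (hNs : J.neighborSet s = {x, y}) (hNt : J.neighborSet t = {z, w})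
    (hfeas : ∀ F : Set (Sym2 V), F ⊆ J.edgeSet → F.ncard ≤ 2 →
        (J.deleteEdges F).Reachable s t → (H.deleteEdges F).Reachable s t)
    (hcut : ∀ F : Set (Sym2 V), F ⊆ J.edgeSet → F.ncard ≤ 2 →
      ¬ (s(s,x) ∈ F ∧ s(s,y) ∈ F) → ¬ (s(z,t) ∈ F ∧ s(w,t) ∈ F) →
      (J.deleteEdges F).Reachable s t)
    (F' : Set (Sym2 V)) (hF'J : F' ⊆ J.edgeSet) (hF'c : F'.ncard ≤ 2)
    (hF's : ¬ (s(s,x) ∈ F' ∧ s(s,y) ∈ F'))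
    (hF't : ¬ (s(z,t) ∈ F' ∧ s(w,t) ∈ F')) :
    ∃ c d : V, (c = x ∨ c = y) ∧ (d = z ∨ d = w) ∧
      s(s,c) ∉ F' ∧ s(d,t) ∉ F' ∧ H.Adj s c ∧ H.Adj d t ∧
      ∃ q : H.Walk c d, ∀ e ∈ q.edges, e ∉ F' ∧ s ∉ e ∧ t ∉ e := by
  classical
  obtain ⟨p0⟩ := hfeas F' hF'J hF'c (hcut F' hF'J hF'c hF's hF't)
  obtain ⟨p, hp⟩ := p0.toPath
  obtain ⟨c, r, hac, hrp, hrs, _⟩ := chop p hp hst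
  have hadj : H.Adj s c ∧ s(s,c) ∉ F' := by
    rw [← SimpleGraph.deleteEdges_adj]; exact hac
  have hc : c = x ∨ c = y := by
    have : c ∈ J.neighborSet s := hH hadj.1
    rw [hNs] at this
    simpa using this
  have hct : c ≠ t := by
    rintro rfl
    rcases hc with rfl | rfl
    · exact htx rfl
    · exact hty rfl
  obtain ⟨d, r2, htd, _, hrt, hsub⟩ := chop r.reverse hrp.reverse (Ne.symm hct)
  have hadj2 : H.Adj t d ∧ s(t,d) ∉ F' := by
    rw [← SimpleGraph.deleteEdges_adj]; exact htd
  have hd : d = z ∨ d = w := by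
    have : d ∈ J.neighborSet t := hH hadj2.1
    rw [hNt] at this
    simpa using this
  have hedge : ∀ e ∈ r2.edges, e ∉ F' ∧ s ∉ e ∧ t ∉ e := by
    intro e he
    have her : e ∈ r.edges := by
      have := hsub e he
      rwa [SimpleGraph.Walk.edges_reverse, List.mem_reverse] at this
    refine ⟨?_, hrs e her, hrt e he⟩
    have := r.edges_subset_edgeSet her
    rw [SimpleGraph.edgeSet_deleteEdges] at this
    exact this.2
  refine ⟨c, d, hc, hd, hadj.2, by rw [Sym2.eq_swap]; exact hadj2.2, hadj.1, hadj2.1.symm, ?_⟩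
  refine ⟨(r2.reverse.transfer H ?_), ?_⟩
  · intro e he
    rw [SimpleGraph.Walk.edges_reverse, List.mem_reverse] at he
    have := r2.edges_subset_edgeSet he
    rw [SimpleGraph.edgeSet_deleteEdges] at this
    exact SimpleGraph.edgeSet_mono (le_refl H) this.1
  · intro e he
    rw [SimpleGraph.Walk.edges_transfer, SimpleGraph.Walk.edges_reverse,
      List.mem_reverse] at he
    exact hedge e he

lemma nePair {V : Type*} {a b c d : V} (h1 : a ≠ c ∨ b ≠ d) (h2 : a ≠ d ∨ b ≠ c) :
    s(a,b) ≠ s(c,d) := by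
  intro h
  rcases Sym2.eq_iff.mp h with ⟨rfl, rfl⟩ | ⟨rfl, rfl⟩
  · rcases h1 with h | h <;> exact h rfl
  · rcases h2 with h | h <;> exact h rfl

lemma hook_lemma {V : Type*} [Fintype V] (J H : SimpleGraph V) (s t x y z w : V)
    (hst : s ≠ t) (htx : t ≠ x) (hty : t ≠ y) (hsz : s ≠ z) (hsw : s ≠ w)
    (hxy : x ≠ y) (hzw : z ≠ w)
    (hH : H ≤ J)
    (hNs : J.neighborSet s = {x, y}) (hNt : J.neighborSet t = {z, w})
    (hfeas : ∀ F : Set (Sym2 V), F ⊆ J.edgeSet → F.ncard ≤ 2 →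
        (J.deleteEdges F).Reachable s t → (H.deleteEdges F).Reachable s t)
    (hcut : ∀ F : Set (Sym2 V), F ⊆ J.edgeSet → F.ncard ≤ 2 →
      ¬ (s(s,x) ∈ F ∧ s(s,y) ∈ F) → ¬ (s(z,t) ∈ F ∧ s(w,t) ∈ F) →
      (J.deleteEdges F).Reachable s t)
    (F : Set (Sym2 V)) (hFH : F ⊆ H.edgeSet) (hFc : F.ncard ≤ 2)
    (hxF : s(s,x) ∈ F) (hyF : s(s,y) ∉ F) :
    (H.deleteEdges F).Reachable x t := by
  have hFJ : F ⊆ J.edgeSet := hFH.trans (SimpleGraph.edgeSet_mono hH)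
  set F'' : Set (Sym2 V) := insert s(s,y) (F \ {s(s,x)}) with hF''
  have hsyJ : s(s,y) ∈ J.edgeSet := by
    have hx : y ∈ J.neighborSet s := by rw [hNs]; exact Set.mem_insert_of_mem _ rfl
    exact hx
  have hsub : F'' ⊆ J.edgeSet :=
    Set.insert_subset hsyJ (Set.diff_subset.trans hFJ)
  have hdcard : (F \ {s(s,x)}).ncard + 1 = F.ncard :=
    Set.ncard_diff_singleton_add_one hxF (Set.toFinite F)
  have hcard : F''.ncard ≤ 2 := by
    rw [hF'']
    have := Set.ncard_insert_le s(s,y) (F \ {s(s,x)})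
    omega
  have hys : y ≠ s := fun h => J.irrefl (h ▸ (show J.Adj s y from hsyJ))
  have hJz' : z ∈ J.neighborSet t := by rw [hNt]; exact Set.mem_insert _ _
  have hzt : z ≠ t := fun h => J.irrefl (h ▸ (show J.Adj t z from hJz'))
  have nexy : s(s,x) ≠ s(s,y) := nePair (Or.inr hxy) (Or.inl hys.symm)
  have h1 : ¬ (s(s,x) ∈ F'' ∧ s(s,y) ∈ F'') := by
    rintro ⟨hmem, -⟩
    rcases Set.mem_insert_iff.mp hmem with heq | hmem'
    · exact nexy heq
    · simp at hmem'
  have h2 : ¬ (s(z,t) ∈ F'' ∧ s(w,t) ∈ F'') := by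
    rintro ⟨hz, hw⟩
    have hz' : s(z,t) ∈ F \ {s(s,x)} := by
      rcases Set.mem_insert_iff.mp hz with heq | h
      · exact absurd heq (nePair (Or.inl hsz.symm) (Or.inr hst.symm))
      · exact h
    have hw' : s(w,t) ∈ F \ {s(s,x)} := by
      rcases Set.mem_insert_iff.mp hw with heq | h
      · exact absurd heq (nePair (Or.inl hsw.symm) (Or.inr hst.symm))
      · exact h
    have hzw' : s(z,t) ≠ s(w,t) := nePair (Or.inl hzw) (Or.inl hzt)
    have hsub2 : ({s(z,t), s(w,t)} : Set (Sym2 V)) ⊆ F \ {s(s,x)} := by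
      intro e he
      rcases he with rfl | he
      · exact hz'
      · rw [Set.mem_singleton_iff] at he; subst he; exact hw'
    have := Set.ncard_le_ncard hsub2 (Set.toFinite _)
    rw [Set.ncard_pair hzw'] at this
    omega
  obtain ⟨c, d, hc, hd, hcF, hdF, hsc, hdt, q, hq⟩ :=
    extract_lemma J H s t x y z w hst htx hty hH hNs hNt hfeas hcut F'' hsub hcard h1 h2
  have hcx : c = x := by
    rcases hc with rfl | rfl
    · rfl
    · exact absurd (Set.mem_insert _ _) hcF
  have hqF : ∀ e ∈ q.edges, e ∈ (H.deleteEdges F).edgeSet := by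
    intro e he
    rw [SimpleGraph.edgeSet_deleteEdges]
    refine ⟨q.edges_subset_edgeSet he, fun heF => ?_⟩
    by_cases hex : e = s(s,x)
    · exact (hq e he).2.1 (by rw [hex]; simp)
    · exact (hq e he).1 (Set.mem_insert_of_mem _ ⟨heF, hex⟩)
  have hdtF : s(d,t) ∉ F := by
    intro h
    by_cases hex : s(d,t) = s(s,x)
    · exact absurd hex (nePair (Or.inr htx) (Or.inr hst.symm))
    · exact hdF (Set.mem_insert_of_mem _ ⟨h, hex⟩)
  have hres : (H.deleteEdges F).Reachable c t := Reachable.trans ⟨q.transfer _ hqF⟩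
    (SimpleGraph.Adj.reachable (SimpleGraph.deleteEdges_adj.mpr ⟨hdt, hdtF⟩))
  rwa [hcx] at hres


theorem stmt_5 {V : Type*} [Fintype V] (J : SimpleGraph V) (s t x y z w : V)
    (hdist : ([s, t, x, y, z, w] : List V).Pairwise (· ≠ ·))
    (h2ec : TwoEdgeConnected J)
    -- Property (A)
    (hA : J.neighborSet s = {x, y} ∧ J.neighborSet t = {z, w})
    -- Property (B)
    (hB : ∀ A : Set V, s ∈ A → t ∉ A → (delta J A).ncard = 2 →
      A = {s} ∨ A = ({t} : Set V)ᶜ)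
    -- H is a spanning subgraph of J containing the four forced edges
    (H : SimpleGraph V) (hH : H ≤ J)
    (hsx : s(s, x) ∈ H.edgeSet) (hsy : s(s, y) ∈ H.edgeSet)
    (hzt : s(z, t) ∈ H.edgeSet) (hwt : s(w, t) ∈ H.edgeSet)
    -- H is feasible (satisfies the relative demand (s,t,3) on J)
    (hfeas : ∀ F : Set (Sym2 V), F ⊆ J.edgeSet → F.ncard ≤ 2 →
        (J.deleteEdges F).Reachable s t → (H.deleteEdges F).Reachable s t) :
    -- then R = {x,y,z,w} is a 3-edge-connected subset of H
    ∀ u ∈ ({x, y, z, w} : Set V), ∀ v ∈ ({x, y, z, w} : Set V),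
      ∀ F : Set (Sym2 V), F ⊆ H.edgeSet → F.ncard ≤ 2 →
        (H.deleteEdges F).Reachable u v := by
  classical
  obtain ⟨hNs, hNt⟩ := hA
  simp only [List.pairwise_cons, List.mem_cons, List.mem_singleton, List.not_mem_nil,
    forall_eq_or_imp, forall_eq, List.Pairwise.nil] at hdist
  obtain ⟨⟨hst, hsx', hsy', hsz', hsw', -⟩, ⟨htx, hty, htz, htw, -⟩, ⟨hxy, hxz, hxw, -⟩,
    ⟨hyz, hyw, -⟩, ⟨hzw, -⟩, -⟩ := hdist
  intro u hu v hv F hFH hFc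
  have hFJ : F ⊆ J.edgeSet := hFH.trans (SimpleGraph.edgeSet_mono hH)
  have hcut := cut_lemma J s t x y z w hst h2ec hNs hNt hB
  have hNs' : J.neighborSet s = {y, x} := by rw [hNs, Set.pair_comm]
  have hNt' : J.neighborSet t = {w, z} := by rw [hNt, Set.pair_comm]
  have hfeas_ts : ∀ F : Set (Sym2 V), F ⊆ J.edgeSet → F.ncard ≤ 2 →
      (J.deleteEdges F).Reachable t s → (H.deleteEdges F).Reachable t s :=
    fun F a b c => (hfeas F a b c.symm).symm
  have swzt : s(t,z) = s(z,t) := Sym2.eq_swap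
  have swwt : s(t,w) = s(w,t) := Sym2.eq_swap
  have swxs : s(x,s) = s(s,x) := Sym2.eq_swap
  have swys : s(y,s) = s(s,y) := Sym2.eq_swap
  have hcut_yx : ∀ F : Set (Sym2 V), F ⊆ J.edgeSet → F.ncard ≤ 2 →
      ¬ (s(s,y) ∈ F ∧ s(s,x) ∈ F) → ¬ (s(z,t) ∈ F ∧ s(w,t) ∈ F) →
      (J.deleteEdges F).Reachable s t :=
    fun F a b c d => hcut F a b (fun h => c ⟨h.2, h.1⟩) d
  have hcut_ts : ∀ F : Set (Sym2 V), F ⊆ J.edgeSet → F.ncard ≤ 2 →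
      ¬ (s(t,z) ∈ F ∧ s(t,w) ∈ F) → ¬ (s(x,s) ∈ F ∧ s(y,s) ∈ F) →
      (J.deleteEdges F).Reachable t s := by
    intro F a b c d
    rw [swzt, swwt] at c
    rw [swxs, swys] at d
    exact (hcut F a b d c).symm
  have hcut_ts_wz : ∀ F : Set (Sym2 V), F ⊆ J.edgeSet → F.ncard ≤ 2 →
      ¬ (s(t,w) ∈ F ∧ s(t,z) ∈ F) → ¬ (s(x,s) ∈ F ∧ s(y,s) ∈ F) →
      (J.deleteEdges F).Reachable t s :=
    fun F a b c d => hcut_ts F a b (fun h => c ⟨h.2, h.1⟩) d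
  -- edge inequalities
  have neq1 : s(z,t) ≠ s(s,x) := nePair (Or.inl hsz'.symm) (Or.inr hst.symm)
  have neq2 : s(z,t) ≠ s(s,y) := nePair (Or.inl hsz'.symm) (Or.inr hst.symm)
  have neq3 : s(w,t) ≠ s(s,x) := nePair (Or.inl hsw'.symm) (Or.inr hst.symm)
  have neq4 : s(w,t) ≠ s(s,y) := nePair (Or.inl hsw'.symm) (Or.inr hst.symm)
  have neq5 : s(s,x) ≠ s(s,y) := nePair (Or.inr hxy) (Or.inl hsy')
  have neq6 : s(z,t) ≠ s(w,t) := nePair (Or.inl hzw) (Or.inl htz.symm)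
  suffices hpiv : ∃ p, ∀ r, (r = x ∨ r = y ∨ r = z ∨ r = w) →
      (H.deleteEdges F).Reachable r p by
    obtain ⟨p, hp⟩ := hpiv
    simp only [Set.mem_insert_iff, Set.mem_singleton_iff] at hu hv
    exact (hp u hu).trans (hp v hv).symm
  by_cases h1 : s(s,x) ∈ F ∧ s(s,y) ∈ F
  · -- F = {sx, sy}; pivot t
    have hFeq : F = {s(s,x), s(s,y)} := by
      refine (Set.eq_of_subset_of_ncard_le ?_ ?_ (Set.toFinite F)).symm
      · intro e he
        rcases he with rfl | he
        · exact h1.1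
        · rw [Set.mem_singleton_iff] at he; subst he; exact h1.2
      · rw [Set.ncard_pair neq5]; exact hFc
    have hsinF : ∀ e ∈ F, s ∈ e := by
      intro e he; rw [hFeq] at he
      rcases he with rfl | he
      · simp
      · rw [Set.mem_singleton_iff] at he; subst he; simp
    have hnF : ∀ e : Sym2 V, e ≠ s(s,x) → e ≠ s(s,y) → e ∉ F := by
      intro e hn1 hn2 hmem
      rw [hFeq] at hmem
      rcases hmem with h | h
      · exact hn1 h
      · rw [Set.mem_singleton_iff] at h; exact hn2 h
    have hzreach : (H.deleteEdges F).Reachable z t :=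
      SimpleGraph.Adj.reachable
        (SimpleGraph.deleteEdges_adj.mpr ⟨hzt, hnF _ neq1 neq2⟩)
    have hwreach : (H.deleteEdges F).Reachable w t :=
      SimpleGraph.Adj.reachable
        (SimpleGraph.deleteEdges_adj.mpr ⟨hwt, hnF _ neq3 neq4⟩)
    have hxreach : (H.deleteEdges F).Reachable x t := by
      obtain ⟨c, d, hc, hd, hcF, hdF, -, -, q, hq⟩ :=
        extract_lemma J H s t x y z w hst htx hty hH hNs hNt hfeas hcut
          {s(s,y), s(w,t)}
          (by intro e he
              rcases he with rfl | he
              · exact SimpleGraph.edgeSet_mono hH hsy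
              · rw [Set.mem_singleton_iff] at he; subst he
                exact SimpleGraph.edgeSet_mono hH hwt)
          ((Set.ncard_pair neq4.symm).le)
          (by rintro ⟨hmem, -⟩
              rcases hmem with h | h
              · exact neq5 h
              · rw [Set.mem_singleton_iff] at h; exact neq3 h.symm)
          (by rintro ⟨hmem, -⟩
              rcases hmem with h | h
              · exact neq2 h
              · rw [Set.mem_singleton_iff] at h; exact neq6 h)
      have hcx : c = x := by
        rcases hc with rfl | rfl
        · rfl
        · exact absurd (Set.mem_insert _ _) hcF
      have hdz : d = z := by
        rcases hd with rfl | rfl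
        · rfl
        · exact absurd (Set.mem_insert_of_mem _ rfl) hdF
      have hqF : ∀ e ∈ q.edges, e ∈ (H.deleteEdges F).edgeSet := by
        intro e he
        rw [SimpleGraph.edgeSet_deleteEdges]
        exact ⟨q.edges_subset_edgeSet he, fun hf => (hq e he).2.1 (hsinF e hf)⟩
      have hr : (H.deleteEdges F).Reachable c d := ⟨q.transfer _ hqF⟩
      rw [hcx, hdz] at hr
      exact hr.trans hzreach
    have hyreach : (H.deleteEdges F).Reachable y t := by
      obtain ⟨c, d, hc, hd, hcF, hdF, -, -, q, hq⟩ :=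
        extract_lemma J H s t y x z w hst hty htx hH hNs' hNt hfeas hcut_yx
          {s(s,x), s(w,t)}
          (by intro e he
              rcases he with rfl | he
              · exact SimpleGraph.edgeSet_mono hH hsx
              · rw [Set.mem_singleton_iff] at he; subst he
                exact SimpleGraph.edgeSet_mono hH hwt)
          ((Set.ncard_pair neq3.symm).le)
          (by rintro ⟨hmem, -⟩
              rcases hmem with h | h
              · exact neq5 h.symm
              · rw [Set.mem_singleton_iff] at h; exact neq4 h.symm)
          (by rintro ⟨hmem, -⟩
              rcases hmem with h | h
              · exact neq1 h
              · rw [Set.mem_singleton_iff] at h; exact neq6 h)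
      have hcy : c = y := by
        rcases hc with rfl | rfl
        · rfl
        · exact absurd (Set.mem_insert _ _) hcF
      have hdz : d = z := by
        rcases hd with rfl | rfl
        · rfl
        · exact absurd (Set.mem_insert_of_mem _ rfl) hdF
      have hqF : ∀ e ∈ q.edges, e ∈ (H.deleteEdges F).edgeSet := by
        intro e he
        rw [SimpleGraph.edgeSet_deleteEdges]
        exact ⟨q.edges_subset_edgeSet he, fun hf => (hq e he).2.1 (hsinF e hf)⟩
      have hr : (H.deleteEdges F).Reachable c d := ⟨q.transfer _ hqF⟩
      rw [hcy, hdz] at hr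
      exact hr.trans hzreach
    exact ⟨t, by rintro r (rfl | rfl | rfl | rfl)
                 exacts [hxreach, hyreach, hzreach, hwreach]⟩
  · by_cases h2 : s(z,t) ∈ F ∧ s(w,t) ∈ F
    · -- F = {zt, wt}; pivot s
      have hFeq : F = {s(z,t), s(w,t)} := by
        refine (Set.eq_of_subset_of_ncard_le ?_ ?_ (Set.toFinite F)).symm
        · intro e he
          rcases he with rfl | he
          · exact h2.1
          · rw [Set.mem_singleton_iff] at he; subst he; exact h2.2
        · rw [Set.ncard_pair neq6]; exact hFc
      have htinF : ∀ e ∈ F, t ∈ e := by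
        intro e he; rw [hFeq] at he
        rcases he with rfl | he
        · simp
        · rw [Set.mem_singleton_iff] at he; subst he; simp
      have hnF : ∀ e : Sym2 V, e ≠ s(z,t) → e ≠ s(w,t) → e ∉ F := by
        intro e hn1 hn2 hmem
        rw [hFeq] at hmem
        rcases hmem with h | h
        · exact hn1 h
        · rw [Set.mem_singleton_iff] at h; exact hn2 h
      have hxreach : (H.deleteEdges F).Reachable x s :=
        (SimpleGraph.Adj.reachable
          (SimpleGraph.deleteEdges_adj.mpr ⟨hsx, hnF _ neq1.symm neq3.symm⟩)).symm
      have hyreach : (H.deleteEdges F).Reachable y s :=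
        (SimpleGraph.Adj.reachable
          (SimpleGraph.deleteEdges_adj.mpr ⟨hsy, hnF _ neq2.symm neq4.symm⟩)).symm
      have hzreach : (H.deleteEdges F).Reachable z s := by
        obtain ⟨c, d, hc, hd, hcF, hdF, -, -, q, hq⟩ :=
          extract_lemma J H s t x y z w hst htx hty hH hNs hNt hfeas hcut
            {s(s,y), s(w,t)}
            (by intro e he
                rcases he with rfl | he
                · exact SimpleGraph.edgeSet_mono hH hsy
                · rw [Set.mem_singleton_iff] at he; subst he
                  exact SimpleGraph.edgeSet_mono hH hwt)
            ((Set.ncard_pair neq4.symm).le)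
            (by rintro ⟨hmem, -⟩
                rcases hmem with h | h
                · exact neq5 h
                · rw [Set.mem_singleton_iff] at h; exact neq3 h.symm)
            (by rintro ⟨hmem, -⟩
                rcases hmem with h | h
                · exact neq2 h
                · rw [Set.mem_singleton_iff] at h; exact neq6 h)
        have hcx : c = x := by
          rcases hc with rfl | rfl
          · rfl
          · exact absurd (Set.mem_insert _ _) hcF
        have hdz : d = z := by
          rcases hd with rfl | rfl
          · rfl
          · exact absurd (Set.mem_insert_of_mem _ rfl) hdF
        have hqF : ∀ e ∈ q.edges, e ∈ (H.deleteEdges F).edgeSet := by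
          intro e he
          rw [SimpleGraph.edgeSet_deleteEdges]
          exact ⟨q.edges_subset_edgeSet he, fun hf => (hq e he).2.2 (htinF e hf)⟩
        have hr : (H.deleteEdges F).Reachable c d := ⟨q.transfer _ hqF⟩
        rw [hcx, hdz] at hr
        exact hr.symm.trans hxreach
      have hwreach : (H.deleteEdges F).Reachable w s := by
        obtain ⟨c, d, hc, hd, hcF, hdF, -, -, q, hq⟩ :=
          extract_lemma J H s t x y z w hst htx hty hH hNs hNt hfeas hcut
            {s(s,y), s(z,t)}
            (by intro e he
                rcases he with rfl | he
                · exact SimpleGraph.edgeSet_mono hH hsy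
                · rw [Set.mem_singleton_iff] at he; subst he
                  exact SimpleGraph.edgeSet_mono hH hzt)
            ((Set.ncard_pair neq2.symm).le)
            (by rintro ⟨hmem, -⟩
                rcases hmem with h | h
                · exact neq5 h
                · rw [Set.mem_singleton_iff] at h; exact neq1 h.symm)
            (by rintro ⟨-, hmem⟩
                rcases hmem with h | h
                · exact neq4 h
                · rw [Set.mem_singleton_iff] at h; exact neq6 h.symm)
        have hcx : c = x := by
          rcases hc with rfl | rfl
          · rfl
          · exact absurd (Set.mem_insert _ _) hcF
        have hdw : d = w := by
          rcases hd with rfl | rfl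
          · exact absurd (Set.mem_insert_of_mem _ rfl) hdF
          · rfl
        have hqF : ∀ e ∈ q.edges, e ∈ (H.deleteEdges F).edgeSet := by
          intro e he
          rw [SimpleGraph.edgeSet_deleteEdges]
          exact ⟨q.edges_subset_edgeSet he, fun hf => (hq e he).2.2 (htinF e hf)⟩
        have hr : (H.deleteEdges F).Reachable c d := ⟨q.transfer _ hqF⟩
        rw [hcx, hdw] at hr
        exact hr.symm.trans hxreach
      exact ⟨s, by rintro r (rfl | rfl | rfl | rfl)
                   exacts [hxreach, hyreach, hzreach, hwreach]⟩
    · -- general case; pivot t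
      obtain ⟨c, d, hc, hd, hcF, hdF, hsc, hdt, q, hq⟩ :=
        extract_lemma J H s t x y z w hst htx hty hH hNs hNt hfeas hcut F hFJ hFc h1 h2
      have hqF : ∀ e ∈ q.edges, e ∈ (H.deleteEdges F).edgeSet := by
        intro e he
        rw [SimpleGraph.edgeSet_deleteEdges]
        exact ⟨q.edges_subset_edgeSet he, (hq e he).1⟩
      have hcd : (H.deleteEdges F).Reachable c d := ⟨q.transfer _ hqF⟩
      have hstR : (H.deleteEdges F).Reachable s t :=
        (SimpleGraph.Adj.reachable (SimpleGraph.deleteEdges_adj.mpr ⟨hsc, hcF⟩)).trans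
          (hcd.trans
            (SimpleGraph.Adj.reachable (SimpleGraph.deleteEdges_adj.mpr ⟨hdt, hdF⟩)))
      refine ⟨t, ?_⟩
      rintro r (rfl | rfl | rfl | rfl)
      · by_cases hx : s(s,r) ∈ F
        · exact hook_lemma J H s t r y z w hst htx hty hsz' hsw' hxy hzw hH hNs hNt
            hfeas hcut F hFH hFc hx (fun hyy => h1 ⟨hx, hyy⟩)
        · exact (SimpleGraph.Adj.reachable
            (SimpleGraph.deleteEdges_adj.mpr ⟨hsx, hx⟩)).symm.trans hstR
      · by_cases hy : s(s,r) ∈ F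
        · exact hook_lemma J H s t r x z w hst hty htx hsz' hsw' hxy.symm hzw hH hNs' hNt
            hfeas hcut_yx F hFH hFc hy (fun hxx => h1 ⟨hxx, hy⟩)
        · exact (SimpleGraph.Adj.reachable
            (SimpleGraph.deleteEdges_adj.mpr ⟨hsy, hy⟩)).symm.trans hstR
      · by_cases hz : s(r,t) ∈ F
        · have hres := hook_lemma J H t s r w x y hst.symm hsz' hsw' htx hty hzw hxy hH
            hNt hNs hfeas_ts hcut_ts F hFH hFc (by rwa [swzt])
            (fun hww => h2 ⟨hz, by rwa [swwt] at hww⟩)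
          exact hres.trans hstR
        · exact SimpleGraph.Adj.reachable (SimpleGraph.deleteEdges_adj.mpr ⟨hzt, hz⟩)
      · by_cases hw : s(r,t) ∈ F
        · have hres := hook_lemma J H t s r z x y hst.symm hsw' hsz' htx hty hzw.symm hxy hH
            hNt' hNs hfeas_ts hcut_ts_wz F hFH hFc (by rwa [swwt])
            (fun hzz => h2 ⟨by rwa [swzt] at hzz, hw⟩)
          exact hres.trans hstR
        · exact SimpleGraph.Adj.reachable (SimpleGraph.deleteEdges_adj.mpr ⟨hwt, hw⟩)
end

section
/- Let J be an instance graph with properties (A) and (B), and let H be a spanning subgraph of J containing the four forced edges sx, sy, zt, wt. If R = {x,y,z,w} is a 3-edge-connected subset of H (for all u,v ∈ R and every F ⊆ E(H) with |F| ≤ 2, u and v are connected in H∖F), then H is a feasible solution, i.e., H satisfies the relative demand (s,t,3) on J. -/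
open SimpleGraph

theorem stmt_6 {V : Type*} [Fintype V] (J : SimpleGraph V) (s t x y z w : V)
    (hdist : ([s, t, x, y, z, w] : List V).Pairwise (· ≠ ·))
    (h2ec : TwoEdgeConnected J)
    -- Property (A)
    (hA : J.neighborSet s = {x, y} ∧ J.neighborSet t = {z, w})
    -- Property (B)
    (hB : ∀ A : Set V, s ∈ A → t ∉ A → (delta J A).ncard = 2 →
      A = {s} ∨ A = ({t} : Set V)ᶜ)
    -- H is a spanning subgraph of J containing the four forced edges
    (H : SimpleGraph V) (hH : H ≤ J)
    (hsx : s(s, x) ∈ H.edgeSet) (hsy : s(s, y) ∈ H.edgeSet)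
    (hzt : s(z, t) ∈ H.edgeSet) (hwt : s(w, t) ∈ H.edgeSet)
    -- R = {x,y,z,w} is a 3-edge-connected subset of H
    (h3ec : ∀ u ∈ ({x, y, z, w} : Set V), ∀ v ∈ ({x, y, z, w} : Set V),
      ∀ F : Set (Sym2 V), F ⊆ H.edgeSet → F.ncard ≤ 2 →
        (H.deleteEdges F).Reachable u v) :
    -- then H is feasible (satisfies the relative demand (s,t,3) on J)
    ∀ F : Set (Sym2 V), F ⊆ J.edgeSet → F.ncard ≤ 2 →
      (J.deleteEdges F).Reachable s t → (H.deleteEdges F).Reachable s t := by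
  intro F hFJ hF2 hreach
  simp only [List.pairwise_cons, List.mem_cons, List.not_mem_nil, List.mem_singleton,
    forall_eq_or_imp, forall_eq, List.Pairwise.nil, and_true, or_false] at hdist
  obtain ⟨⟨hst, hsx', hsy', hsz', hsw'⟩, ⟨htx, hty, htz, htw⟩, hrest⟩ := hdist
  obtain ⟨hAs, hAt⟩ := hA
  -- some edge at s survives
  have hs : s(s, x) ∉ F ∨ s(s, y) ∉ F := by
    by_contra h
    push_neg at h
    obtain ⟨p⟩ := hreach
    cases p with
    | nil => exact hst rfl
    | cons hadj p =>
      rw [SimpleGraph.deleteEdges_adj] at hadj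
      have hv : _ ∈ J.neighborSet s := hadj.1
      rw [hAs] at hv
      rcases hv with rfl | rfl
      · exact hadj.2 h.1
      · exact hadj.2 h.2
  have ht : s(z, t) ∉ F ∨ s(w, t) ∉ F := by
    by_contra h
    push_neg at h
    obtain ⟨p⟩ := hreach.symm
    cases p with
    | nil => exact hst rfl.symm
    | cons hadj p =>
      rw [SimpleGraph.deleteEdges_adj, Sym2.eq_swap] at hadj
      have hv : _ ∈ J.neighborSet t := hadj.1
      rw [hAt] at hv
      rcases hv with rfl | rfl
      · exact hadj.2 h.1
      · exact hadj.2 h.2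
  have hEq : H.deleteEdges F = H.deleteEdges (F ∩ H.edgeSet) := by
    ext u v
    simp only [SimpleGraph.deleteEdges_adj, Set.mem_inter_iff, SimpleGraph.mem_edgeSet]
    tauto
  have hmid : ∀ a ∈ ({x, y, z, w} : Set V), ∀ b ∈ ({x, y, z, w} : Set V),
      (H.deleteEdges F).Reachable a b := by
    intro a ha b hb
    rw [hEq]
    exact h3ec a ha b hb (F ∩ H.edgeSet) Set.inter_subset_right
      (le_trans (Set.ncard_le_ncard Set.inter_subset_left (Set.toFinite F)) hF2)
  obtain ⟨a, haR, haH, haF⟩ : ∃ a, a ∈ ({x, y, z, w} : Set V) ∧ s(s, a) ∈ H.edgeSet ∧ s(s, a) ∉ F := by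
    rcases hs with h | h
    · exact ⟨x, by simp, hsx, h⟩
    · exact ⟨y, by simp, hsy, h⟩
  obtain ⟨b, hbR, hbH, hbF⟩ : ∃ b, b ∈ ({x, y, z, w} : Set V) ∧ s(b, t) ∈ H.edgeSet ∧ s(b, t) ∉ F := by
    rcases ht with h | h
    · exact ⟨z, by simp, hzt, h⟩
    · exact ⟨w, by simp, hwt, h⟩
  have h1 : (H.deleteEdges F).Adj s a := by
    rw [SimpleGraph.deleteEdges_adj]
    exact ⟨H.mem_edgeSet.mp haH, haF⟩
  have h3 : (H.deleteEdges F).Adj b t := by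
    rw [SimpleGraph.deleteEdges_adj]
    exact ⟨H.mem_edgeSet.mp hbH, hbF⟩
  exact (h1.reachable.trans (hmid a haR b hbR)).trans h3.reachable
end

section
/- Let V be a finite set, let I be a set of unordered pairs of distinct elements of V (edges), and for A ⊆ V let d_I(A) be the number of edges of I with exactly one endpoint in A. Let f be a real-valued set function defined on the nonempty proper subsets of V that is symmetric and crossing supermodular. Let 𝓕 = {A : ∅ ≠ A ⊊ V and d_I(A) ≥ 1}. Then f is weakly 𝓕-supermodular: for all A, B ∈ 𝓕, at least one of the following holds: (1) A∩B ∈ 𝓕, A∪B ∈ 𝓕, and f(A)+f(B) ≥ f(A∩B)+f(A∪B); or (2) A∖B ∈ 𝓕, B∖A ∈ 𝓕, and f(A)+f(B) ≥ f(A∖B)+f(B∖A). -/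
/-- Edges of the edge set `I` with exactly one endpoint in `A`. -/
def deltaE {V : Type*} (I : Set (Sym2 V)) (A : Set V) : Set (Sym2 V) :=
  {e | e ∈ I ∧ ∃ u v, e = s(u, v) ∧ u ∈ A ∧ v ∉ A}

/-- The family 𝓕 = {A : ∅ ≠ A ⊊ V and d_I(A) ≥ 1}. -/
def Fam {V : Type*} (I : Set (Sym2 V)) : Set (Set V) :=
  {A | A.Nonempty ∧ A ≠ Set.univ ∧ 1 ≤ (deltaE I A).ncard}

lemma deltaE_compl {V : Type*} (I : Set (Sym2 V)) (A : Set V) :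
    deltaE I Aᶜ = deltaE I A := by
  ext e
  constructor <;> rintro ⟨he, u, v, rfl, hu, hv⟩
  · exact ⟨he, v, u, Sym2.eq_swap, by simpa using hv, by simpa using hu⟩
  · exact ⟨he, v, u, Sym2.eq_swap, by simpa using hv, by simpa using hu⟩

lemma deltaE_nonempty {V : Type*} [Fintype V] {I : Set (Sym2 V)} {A : Set V}
    (h : 1 ≤ (deltaE I A).ncard) : (deltaE I A).Nonempty := by
  exact (Set.ncard_pos (Set.toFinite _)).mp h

lemma deltaE_card {V : Type*} [Fintype V] {I : Set (Sym2 V)} {A : Set V}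
    (h : (deltaE I A).Nonempty) : 1 ≤ (deltaE I A).ncard :=
  (Set.ncard_pos (Set.toFinite _)).mpr h

/-- Each edge crossing `A` crosses `A ∩ B` or `A \ B`. -/
lemma cross_inter_diff {V : Type*} {I : Set (Sym2 V)} {A B : Set V} {e : Sym2 V}
    (he : e ∈ deltaE I A) : e ∈ deltaE I (A ∩ B) ∨ e ∈ deltaE I (A \ B) := by
  obtain ⟨hI, u, v, rfl, hu, hv⟩ := he
  by_cases hb : u ∈ B
  · exact Or.inl ⟨hI, u, v, rfl, ⟨hu, hb⟩, fun h => hv h.1⟩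
  · exact Or.inr ⟨hI, u, v, rfl, ⟨hu, hb⟩, fun h => hv h.1⟩

/-- Each edge crossing `A` crosses `A ∪ B` or `B \ A`. -/
lemma cross_union_diff {V : Type*} {I : Set (Sym2 V)} {A B : Set V} {e : Sym2 V}
    (he : e ∈ deltaE I A) : e ∈ deltaE I (A ∪ B) ∨ e ∈ deltaE I (B \ A) := by
  obtain ⟨hI, u, v, rfl, hu, hv⟩ := he
  by_cases hb : v ∈ B
  · exact Or.inr ⟨hI, v, u, Sym2.eq_swap, ⟨hb, hv⟩, fun h => h.2 hu⟩
  · exact Or.inl ⟨hI, u, v, rfl, Or.inl hu, fun h => h.elim hv hb⟩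

theorem stmt_7 {V : Type*} [Fintype V]
    (I : Set (Sym2 V)) (hI : ∀ e ∈ I, ¬ e.IsDiag)
    (f : Set V → ℝ)
    -- f is symmetric
    (hsym : ∀ A : Set V, A.Nonempty → A ≠ Set.univ → f A = f Aᶜ)
    -- f is crossing supermodular
    (hcross : ∀ A B : Set V, A.Nonempty → A ≠ Set.univ → B.Nonempty → B ≠ Set.univ →
      (A ∩ B).Nonempty → A ∪ B ≠ Set.univ →
      f (A ∩ B) + f (A ∪ B) ≤ f A + f B) :
    -- then f is weakly 𝓕-supermodular
    ∀ A ∈ Fam I, ∀ B ∈ Fam I,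
      (A ∩ B ∈ Fam I ∧ A ∪ B ∈ Fam I ∧ f (A ∩ B) + f (A ∪ B) ≤ f A + f B) ∨
      (A \ B ∈ Fam I ∧ B \ A ∈ Fam I ∧ f (A \ B) + f (B \ A) ≤ f A + f B) := by
  rintro A ⟨hAne, hAu, hAd⟩ B ⟨hBne, hBu, hBd⟩
  by_cases hAB : A ⊆ B
  · left
    rw [Set.inter_eq_self_of_subset_left hAB, Set.union_eq_self_of_subset_left hAB]
    exact ⟨⟨hAne, hAu, hAd⟩, ⟨hBne, hBu, hBd⟩, le_refl _⟩
  by_cases hBA : B ⊆ A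
  · left
    rw [Set.inter_eq_self_of_subset_right hBA, Set.union_eq_self_of_subset_right hBA]
    exact ⟨⟨hBne, hBu, hBd⟩, ⟨hAne, hAu, hAd⟩, le_of_eq (add_comm _ _)⟩
  by_cases hint : A ∩ B = ∅
  · right
    have h1 : A \ B = A := by
      apply Set.Subset.antisymm Set.diff_subset
      intro x hx
      exact ⟨hx, fun hb => absurd (Set.mem_inter hx hb) (by simp [hint])⟩
    have h2 : B \ A = B := by
      apply Set.Subset.antisymm Set.diff_subset
      intro x hx
      exact ⟨hx, fun ha => absurd (Set.mem_inter ha hx) (by simp [hint])⟩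
    rw [h1, h2]
    exact ⟨⟨hAne, hAu, hAd⟩, ⟨hBne, hBu, hBd⟩, le_refl _⟩
  by_cases huniv : A ∪ B = Set.univ
  · right
    have hBcA : Bᶜ ⊆ A := by
      intro x hx
      rcases (Set.eq_univ_iff_forall.mp huniv x) with h | h
      · exact h
      · exact absurd h hx
    have hAcB : Aᶜ ⊆ B := by
      intro x hx
      rcases (Set.eq_univ_iff_forall.mp huniv x) with h | h
      · exact absurd h hx
      · exact h
    have h1 : A \ B = Bᶜ := by
      apply Set.Subset.antisymm
      · intro x hx; exact hx.2
      · intro x hx; exact ⟨hBcA hx, hx⟩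
    have h2 : B \ A = Aᶜ := by
      apply Set.Subset.antisymm
      · intro x hx; exact hx.2
      · intro x hx; exact ⟨hAcB hx, hx⟩
    rw [h1, h2]
    refine ⟨⟨Set.nonempty_compl.mpr hBu, ?_, by rwa [deltaE_compl]⟩,
      ⟨Set.nonempty_compl.mpr hAu, ?_, by rwa [deltaE_compl]⟩, ?_⟩
    · simp only [ne_eq, Set.compl_univ_iff]
      exact hBne.ne_empty
    · simp only [ne_eq, Set.compl_univ_iff]
      exact hAne.ne_empty
    · rw [← hsym A hAne hAu, ← hsym B hBne hBu]
      exact le_of_eq (add_comm _ _)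
  -- crossing case
  have hABne : (A ∩ B).Nonempty := Set.nonempty_iff_ne_empty.mpr hint
  have hdAB : (A \ B).Nonempty := Set.nonempty_iff_ne_empty.mpr (fun h => hAB (Set.diff_eq_empty.mp h))
  have hdBA : (B \ A).Nonempty := Set.nonempty_iff_ne_empty.mpr (fun h => hBA (Set.diff_eq_empty.mp h))
  have hIne : (A ∩ B) ≠ Set.univ := fun h => hAu (Set.eq_univ_of_subset Set.inter_subset_left h)
  have hdABu : (A \ B) ≠ Set.univ := fun h => by
    obtain ⟨x, hx⟩ := hBne
    have : x ∈ A \ B := h ▸ Set.mem_univ x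
    exact this.2 hx
  have hdBAu : (B \ A) ≠ Set.univ := fun h => by
    obtain ⟨x, hx⟩ := hAne
    have : x ∈ B \ A := h ▸ Set.mem_univ x
    exact this.2 hx
  -- the two supermodular inequalities both hold
  have ineq1 : f (A ∩ B) + f (A ∪ B) ≤ f A + f B :=
    hcross A B hAne hAu hBne hBu hABne huniv
  have ineq2 : f (A \ B) + f (B \ A) ≤ f A + f B := by
    have h1 : A ∩ Bᶜ = A \ B := (Set.diff_eq A B).symm
    have h2 : A ∪ Bᶜ = (B \ A)ᶜ := by
      rw [Set.diff_eq, Set.compl_inter, compl_compl, Set.union_comm]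
    have h3 : A ∪ Bᶜ ≠ Set.univ := by
      rw [h2]
      simp only [ne_eq, Set.compl_univ_iff]
      exact hdBA.ne_empty
    have := hcross A Bᶜ hAne hAu (Set.nonempty_compl.mpr hBu)
      (by simp only [ne_eq, Set.compl_univ_iff]; exact hBne.ne_empty)
      (h1 ▸ hdAB) h3
    rw [h1, h2, ← hsym B hBne hBu, ← hsym (B \ A) hdBA hdBAu] at this
    exact this
  obtain ⟨e, he⟩ := deltaE_nonempty hAd
  obtain ⟨e', he'⟩ := deltaE_nonempty hBd
  by_cases hd1 : (deltaE I (A ∩ B)).Nonempty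
  · by_cases hd2 : (deltaE I (A ∪ B)).Nonempty
    · exact Or.inl ⟨⟨hABne, hIne, deltaE_card hd1⟩,
        ⟨hAne.mono Set.subset_union_left, huniv, deltaE_card hd2⟩, ineq1⟩
    · -- deltaE (A ∪ B) empty: edges crossing A cross B \ A, edges crossing B cross A \ B
      have h1 : e ∈ deltaE I (B \ A) :=
        (cross_union_diff he).resolve_left (fun h => hd2 ⟨e, h⟩)
      have h2 : e' ∈ deltaE I (A \ B) := by
        have := cross_union_diff (A := B) (B := A) he'
        rw [Set.union_comm] at this
        exact this.resolve_left (fun h => hd2 ⟨e', h⟩)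
      exact Or.inr ⟨⟨hdAB, hdABu, deltaE_card ⟨e', h2⟩⟩,
        ⟨hdBA, hdBAu, deltaE_card ⟨e, h1⟩⟩, ineq2⟩
  · -- deltaE (A ∩ B) empty: edges crossing A cross A \ B, edges crossing B cross B \ A
    have h1 : e ∈ deltaE I (A \ B) :=
      (cross_inter_diff he).resolve_left (fun h => hd1 ⟨e, h⟩)
    have h2 : e' ∈ deltaE I (B \ A) := by
      have := cross_inter_diff (A := B) (B := A) he'
      rw [Set.inter_comm] at this
      exact this.resolve_left (fun h => hd1 ⟨e', h⟩)
    exact Or.inr ⟨⟨hdAB, hdABu, deltaE_card ⟨e, h1⟩⟩,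
      ⟨hdBA, hdBAu, deltaE_card ⟨e', h2⟩⟩, ineq2⟩
end

section
/- Let V be a finite set, let I be a set of unordered pairs of distinct elements of V (edges), and for A ⊆ V let d_I(A) be the number of edges of I with exactly one endpoint in A. Then the family 𝓕 = {A : ∅ ≠ A ⊊ V and d_I(A) ≥ 1} is uncrossable: for all A, B ∈ 𝓕, either both A∩B ∈ 𝓕 and A∪B ∈ 𝓕, or both A∖B ∈ 𝓕 and B∖A ∈ 𝓕. -/
lemma mem_fam_of_cross {V : Type*} [Fintype V] {I : Set (Sym2 V)} {A : Set V}
    (h : (deltaE I A).Nonempty) : A ∈ Fam I := by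
  obtain ⟨e, heI, u, v, he, hu, hv⟩ := h
  refine ⟨⟨u, hu⟩, ?_, ?_⟩
  · intro hAu; exact hv (hAu ▸ Set.mem_univ v)
  · have hfin : (deltaE I A).Finite := Set.toFinite _
    have : (deltaE I A).Nonempty := ⟨e, heI, u, v, he, hu, hv⟩
    have := (Set.ncard_pos hfin).2 this
    omega

lemma cross_split {V : Type*} {I : Set (Sym2 V)} {A B : Set V} {e : Sym2 V}
    (he : e ∈ deltaE I A) :
    (e ∈ deltaE I (A ∩ B) ∨ e ∈ deltaE I (A \ B)) ∧
    (e ∈ deltaE I (A ∪ B) ∨ e ∈ deltaE I (B \ A)) := by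
  obtain ⟨heI, u, v, he, hu, hv⟩ := he
  have hswap : e = s(v, u) := by rw [he, Sym2.eq_swap]
  by_cases hub : u ∈ B <;> by_cases hvb : v ∈ B
  · exact ⟨Or.inl ⟨heI, u, v, he, ⟨hu, hub⟩, fun h => hv h.1⟩,
      Or.inr ⟨heI, v, u, hswap, ⟨hvb, hv⟩, fun h => h.2 hu⟩⟩
  · exact ⟨Or.inl ⟨heI, u, v, he, ⟨hu, hub⟩, fun h => hv h.1⟩,
      Or.inl ⟨heI, u, v, he, Or.inl hu, fun h => h.elim hv hvb⟩⟩
  · exact ⟨Or.inr ⟨heI, u, v, he, ⟨hu, hub⟩, fun h => h.2 hvb⟩,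
      Or.inr ⟨heI, v, u, hswap, ⟨hvb, hv⟩, fun h => h.2 hu⟩⟩
  · exact ⟨Or.inr ⟨heI, u, v, he, ⟨hu, hub⟩, fun h => hv h.1⟩,
      Or.inl ⟨heI, u, v, he, Or.inl hu, fun h => h.elim hv hvb⟩⟩

theorem stmt_9 {V : Type*} [Fintype V]
    (I : Set (Sym2 V)) (hI : ∀ e ∈ I, ¬ e.IsDiag) :
    -- the family 𝓕 is uncrossable
    ∀ A ∈ Fam I, ∀ B ∈ Fam I,
      (A ∩ B ∈ Fam I ∧ A ∪ B ∈ Fam I) ∨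
      (A \ B ∈ Fam I ∧ B \ A ∈ Fam I) := by
  intro A hA B hB
  obtain ⟨eA, heA⟩ : (deltaE I A).Nonempty :=
    Set.nonempty_of_ncard_ne_zero (by have := hA.2.2; omega)
  obtain ⟨eB, heB⟩ : (deltaE I B).Nonempty :=
    Set.nonempty_of_ncard_ne_zero (by have := hB.2.2; omega)
  have h1 := cross_split (B := B) heA
  have h2 := cross_split (B := A) heB
  rw [Set.inter_comm, Set.union_comm] at h2
  rcases h1.1 with hi | hAB
  · rcases h2.2 with hu | hAB'
    · exact Or.inl ⟨mem_fam_of_cross ⟨eA, hi⟩, mem_fam_of_cross ⟨eB, hu⟩⟩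
    · rcases h1.2 with hu | hBA
      · exact Or.inl ⟨mem_fam_of_cross ⟨eA, hi⟩, mem_fam_of_cross ⟨eA, hu⟩⟩
      · exact Or.inr ⟨mem_fam_of_cross ⟨eB, hAB'⟩, mem_fam_of_cross ⟨eA, hBA⟩⟩
  · rcases h2.1 with hi | hBA
    · rcases h1.2 with hu | hBA'
      · exact Or.inl ⟨mem_fam_of_cross ⟨eB, hi⟩, mem_fam_of_cross ⟨eA, hu⟩⟩
      · exact Or.inr ⟨mem_fam_of_cross ⟨eA, hAB⟩, mem_fam_of_cross ⟨eA, hBA'⟩⟩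
    · exact Or.inr ⟨mem_fam_of_cross ⟨eA, hAB⟩, mem_fam_of_cross ⟨eB, hBA⟩⟩
end

section
/- Let G = (V,E) be a finite, 2-edge-connected, undirected graph and let {(s_i, t_i, k_i)}_{i=1}^{ℓ} be a collection of demands with s_i ≠ t_i and 1 ≤ k_i ≤ 3 for all i. Then there exists a finite set D' of triples (u, v, r) with u, v ∈ V, u ≠ v and r ∈ {1,2,3} such that: (i) every triple (u,v,r) ∈ D' is an ordinary demand, i.e., for every F ⊆ E with |F| ≤ r−1, u and v remain connected in G∖F; and (ii) for every spanning subgraph H of G containing all forced edges, H satisfies every relative demand (s_i, t_i, k_i) if and only if for every (u,v,r) ∈ D' and every F ⊆ E(H) with |F| ≤ r−1, u and v are connected in H∖F. -/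
open SimpleGraph

namespace RSND
variable {V : Type*}

/-- symmetric difference of sets -/
def symmDiff' (A B : Set V) : Set V := (A \ B) ∪ (B \ A)

lemma mem_symmDiff' {A B : Set V} {x : V} : x ∈ symmDiff' A B ↔ ((x ∈ A) ↔ ¬(x ∈ B)) := by
  simp only [symmDiff', Set.mem_union, Set.mem_diff]
  tauto

lemma mem_delta_iff {G : SimpleGraph V} {A : Set V} {u v : V} :
    s(u, v) ∈ delta G A ↔ s(u,v) ∈ G.edgeSet ∧ ((u ∈ A) ↔ ¬(v ∈ A)) := by
  constructor
  · rintro ⟨he, x, y, hxy, hx, hy⟩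
    refine ⟨he, ?_⟩
    rw [Sym2.eq_iff] at hxy
    rcases hxy with ⟨rfl, rfl⟩ | ⟨rfl, rfl⟩
    · tauto
    · tauto
  · rintro ⟨he, hiff⟩
    refine ⟨he, ?_⟩
    by_cases hu : u ∈ A
    · exact ⟨u, v, rfl, hu, by tauto⟩
    · exact ⟨v, u, Sym2.eq_swap, by tauto, hu⟩

lemma delta_subset_edgeSet {G : SimpleGraph V} {A : Set V} : delta G A ⊆ G.edgeSet :=
  fun _ he => he.1

lemma delta_compl {G : SimpleGraph V} {A : Set V} : delta G Aᶜ = delta G A := by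
  ext e
  induction e using Sym2.ind with
  | _ u v =>
    simp only [mem_delta_iff, Set.mem_compl_iff]
    tauto

lemma delta_symmDiff {G : SimpleGraph V} (A B : Set V) :
    delta G (symmDiff' A B) = symmDiff' (delta G A) (delta G B) := by
  ext e
  induction e using Sym2.ind with
  | _ u v =>
    by_cases he : s(u,v) ∈ G.edgeSet
    · simp only [mem_symmDiff', mem_delta_iff, he, true_and, mem_symmDiff']
      tauto
    · constructor
      · rintro h; exact absurd (delta_subset_edgeSet h) he
      · rintro h
        rcases h with ⟨h1, -⟩ | ⟨h1, -⟩ <;> exact absurd (delta_subset_edgeSet h1) he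

lemma delta_mono {G H : SimpleGraph V} (hHG : H ≤ G) (A : Set V) : delta H A ⊆ delta G A := by
  rintro e ⟨he, hx⟩
  exact ⟨SimpleGraph.edgeSet_mono hHG he, hx⟩

lemma delta_deleteEdges {G : SimpleGraph V} (F : Set (Sym2 V)) (A : Set V) :
    delta (G.deleteEdges F) A = delta G A \ F := by
  ext e
  induction e using Sym2.ind with
  | _ u v =>
    simp only [mem_delta_iff, Set.mem_diff, SimpleGraph.edgeSet_deleteEdges, Set.mem_diff]
    tauto

/-- if an edge of H lies in `delta G A` it lies in `delta H A` -/
lemma mem_delta_of_edge {G H : SimpleGraph V} (hHG : H ≤ G) {A : Set V} {e : Sym2 V}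
    (he : e ∈ H.edgeSet) (heA : e ∈ delta G A) : e ∈ delta H A := by
  exact ⟨he, heA.2⟩

/-- closed cut: unreachable -/
lemma not_reachable_of_delta_empty {K : SimpleGraph V} {A : Set V} {u v : V}
    (hu : u ∈ A) (hv : v ∉ A) (hdel : delta K A = ∅) : ¬ K.Reachable u v := by
  intro hr
  obtain ⟨w⟩ := hr
  -- induct on walk: first vertex outside A gives a crossing edge
  have : ∀ {x y : V} (w : K.Walk x y), x ∈ A → y ∉ A → False := by
    intro x y w
    induction w with
    | nil => intro hx hy; exact hy hx
    | @cons a b c hadj w ih =>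
      intro hx hy
      by_cases hb : b ∈ A
      · exact ih hb hy
      · have : s(a, b) ∈ delta K A := by
          rw [mem_delta_iff]
          exact ⟨hadj, by tauto⟩
        rw [hdel] at this
        exact this
  exact this w hu hv

/-- the reachability set: nothing of K crosses it -/
lemma delta_reachSet (K : SimpleGraph V) (u : V) :
    delta K {z | K.Reachable u z} = ∅ := by
  ext e
  induction e using Sym2.ind with
  | _ x y =>
    simp only [Set.mem_empty_iff_false, iff_false]
    rw [mem_delta_iff]
    rintro ⟨he, hiff⟩
    simp only [Set.mem_setOf_eq] at hiff
    have hadj : K.Adj x y := he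
    by_cases hx : K.Reachable u x
    · have : K.Reachable u y := hx.trans hadj.reachable
      tauto
    · have : ¬ K.Reachable u y := by
        intro hy
        exact hx (hy.trans hadj.symm.reachable)
      tauto

end RSND

namespace RSND
variable {V : Type*} [Fintype V]

lemma delta_finite (K : SimpleGraph V) (A : Set V) : (delta K A).Finite := Set.toFinite _

lemma submod1 (K : SimpleGraph V) (A B : Set V) :
    (delta K (A ∩ B)).ncard + (delta K (A ∪ B)).ncard ≤
      (delta K A).ncard + (delta K B).ncard := by
  classical
  have h1 : delta K (A ∩ B) ∪ delta K (A ∪ B) ⊆ delta K A ∪ delta K B := by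
    intro e he
    induction e using Sym2.ind with
    | _ u v =>
      simp only [Set.mem_union, mem_delta_iff, Set.mem_inter_iff, Set.mem_union] at he ⊢
      tauto
  have h2 : delta K (A ∩ B) ∩ delta K (A ∪ B) ⊆ delta K A ∩ delta K B := by
    intro e he
    induction e using Sym2.ind with
    | _ u v =>
      simp only [Set.mem_inter_iff, mem_delta_iff, Set.mem_inter_iff, Set.mem_union] at he ⊢
      tauto
  calc (delta K (A ∩ B)).ncard + (delta K (A ∪ B)).ncard
      = (delta K (A ∩ B) ∪ delta K (A ∪ B)).ncard + (delta K (A ∩ B) ∩ delta K (A ∪ B)).ncard := by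
        rw [Set.ncard_union_add_ncard_inter]
    _ ≤ (delta K A ∪ delta K B).ncard + (delta K A ∩ delta K B).ncard :=
        Nat.add_le_add (Set.ncard_le_ncard h1 (Set.toFinite _))
          (Set.ncard_le_ncard h2 (Set.toFinite _))
    _ = (delta K A).ncard + (delta K B).ncard := by rw [Set.ncard_union_add_ncard_inter]

lemma submod2 (K : SimpleGraph V) (A B : Set V) :
    (delta K (A \ B)).ncard + (delta K (B \ A)).ncard ≤
      (delta K A).ncard + (delta K B).ncard := by
  classical
  have h1 : delta K (A \ B) ∪ delta K (B \ A) ⊆ delta K A ∪ delta K B := by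
    intro e he
    induction e using Sym2.ind with
    | _ u v =>
      simp only [Set.mem_union, mem_delta_iff, Set.mem_diff] at he ⊢
      tauto
  have h2 : delta K (A \ B) ∩ delta K (B \ A) ⊆ delta K A ∩ delta K B := by
    intro e he
    induction e using Sym2.ind with
    | _ u v =>
      simp only [Set.mem_inter_iff, mem_delta_iff, Set.mem_diff] at he ⊢
      tauto
  calc (delta K (A \ B)).ncard + (delta K (B \ A)).ncard
      = (delta K (A \ B) ∪ delta K (B \ A)).ncard + (delta K (A \ B) ∩ delta K (B \ A)).ncard := by
        rw [Set.ncard_union_add_ncard_inter]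
    _ ≤ (delta K A ∪ delta K B).ncard + (delta K A ∩ delta K B).ncard :=
        Nat.add_le_add (Set.ncard_le_ncard h1 (Set.toFinite _))
          (Set.ncard_le_ncard h2 (Set.toFinite _))
    _ = (delta K A).ncard + (delta K B).ncard := by rw [Set.ncard_union_add_ncard_inter]

omit [Fintype V] in
lemma exists_cross_edge {K : SimpleGraph V} {A : Set V} {u v : V}
    (hr : K.Reachable u v) (hu : u ∈ A) (hv : v ∉ A) : ∃ e, e ∈ delta K A := by
  by_contra h
  push_neg at h
  exact not_reachable_of_delta_empty hu hv (Set.eq_empty_iff_forall_notMem.2 h) hr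

lemma two_ec_ncard {G : SimpleGraph V} (h2ec : TwoEdgeConnected G) {A : Set V}
    (hA : A.Nonempty) (hAc : Aᶜ.Nonempty) : 2 ≤ (delta G A).ncard := by
  classical
  obtain ⟨u, hu⟩ := hA
  obtain ⟨v, hv⟩ := hAc
  obtain ⟨e, he⟩ := exists_cross_edge (h2ec.1.preconnected u v) hu hv
  obtain ⟨e', he'⟩ := exists_cross_edge ((h2ec.2 e he.1).preconnected u v) hu hv
  rw [delta_deleteEdges] at he'
  have : (1:ℕ) < (delta G A).ncard := by
    rw [Set.one_lt_ncard_iff (delta_finite G A)]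
    exact ⟨e', e, he'.1, he, fun h => he'.2 (by rw [h]; rfl)⟩
  omega

lemma ncard_le_two_cases {A : Set (Sym2 V)} (h : A.ncard ≤ 2) :
    A = ∅ ∨ (∃ e, A = {e}) ∨ (∃ e f, e ≠ f ∧ A = {e, f}) := by
  classical
  have h' : A.ncard = 0 ∨ A.ncard = 1 ∨ A.ncard = 2 := by omega
  rcases h' with h' | h' | h'
  · left; exact (Set.ncard_eq_zero (Set.toFinite _)).1 h'
  · right; left; exact Set.ncard_eq_one.1 h'
  · right; right
    obtain ⟨e, f, hef, rfl⟩ := Set.ncard_eq_two.1 h'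
    exact ⟨e, f, hef, rfl⟩

end RSND

namespace RSND
variable {V : Type*} [Fintype V]

/-- 2-cuts separating s from t -/
def Cut2 (G : SimpleGraph V) (s t : V) (B : Set V) : Prop :=
  s ∈ B ∧ t ∉ B ∧ (delta G B).ncard = 2

def SameBlock (G : SimpleGraph V) (s t : V) (x y : V) : Prop :=
  ∀ B : Set V, Cut2 G s t B → (x ∈ B ↔ y ∈ B)

def Att (G : SimpleGraph V) (s t : V) (x : V) : Prop :=
  x = s ∨ x = t ∨ ∃ B : Set V, Cut2 G s t B ∧ ∃ e ∈ delta G B, x ∈ e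

/-- the k=3 relative demand for the pair (s,t) -/
def Rel3 (G H : SimpleGraph V) (s t : V) : Prop :=
  ∀ F : Set (Sym2 V), F ⊆ G.edgeSet → F.ncard ≤ 2 →
    (G.deleteEdges F).Reachable s t → (H.deleteEdges F).Reachable s t

variable {G H : SimpleGraph V} {s t : V}

lemma cut_from_unreach {K : SimpleGraph V} {u v : V} (h : ¬ K.Reachable u v) :
    ∃ Z : Set V, u ∈ Z ∧ v ∉ Z ∧ delta K Z = ∅ :=
  ⟨{z | K.Reachable u z}, Reachable.refl u, h, delta_reachSet K u⟩

lemma unreach_in_G {h2ec : TwoEdgeConnected G} {F : Set (Sym2 V)}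
    (hF : ¬ (G.deleteEdges F).Reachable s t) (hst : s ≠ t) :
    ∃ Z : Set V, s ∈ Z ∧ t ∉ Z ∧ delta G Z ⊆ F ∧ 2 ≤ (delta G Z).ncard := by
  obtain ⟨Z, hsZ, htZ, hZ⟩ := cut_from_unreach hF
  rw [delta_deleteEdges, Set.diff_eq_empty] at hZ
  exact ⟨Z, hsZ, htZ, hZ, two_ec_ncard h2ec ⟨s, hsZ⟩ ⟨t, htZ⟩⟩

/-- T1 lite: every s-t cut of a Rel3-subgraph has ≥ 2 crossing edges -/
lemma T1lite (h2ec : TwoEdgeConnected G) (hHG : H ≤ G) (hrel : Rel3 G H s t)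
    (hst : s ≠ t) {X : Set V} (hsX : s ∈ X) (htX : t ∉ X) :
    2 ≤ (delta H X).ncard := by
  by_contra hlt
  push_neg at hlt
  set F := delta H X with hF
  have hFG : F ⊆ G.edgeSet := fun e he => SimpleGraph.edgeSet_mono hHG he.1
  have hcard : F.ncard ≤ 2 := by omega
  have hHunreach : ¬ (H.deleteEdges F).Reachable s t := by
    apply not_reachable_of_delta_empty hsX htX
    rw [delta_deleteEdges]
    exact Set.diff_eq_empty.2 (le_refl _)
  have hGunreach : ¬ (G.deleteEdges F).Reachable s t :=
    fun h => hHunreach (hrel F hFG hcard h)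
  obtain ⟨Z, -, -, hsub, hge⟩ := unreach_in_G (h2ec := h2ec) hGunreach hst
  have := Set.ncard_le_ncard hsub (Set.toFinite _)
  omega

/-- T1 full: an s-t cut of a Rel3-subgraph with exactly ≤2 crossing edges has
its crossing edges forming δ_G(B) for a 2-cut B -/
lemma T1full (h2ec : TwoEdgeConnected G) (hHG : H ≤ G) (hrel : Rel3 G H s t)
    (hst : s ≠ t) {X : Set V} (hsX : s ∈ X) (htX : t ∉ X)
    (hle : (delta H X).ncard ≤ 2) :
    ∃ B : Set V, Cut2 G s t B ∧ delta G B = delta H X := by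
  set F := delta H X with hF
  have hFG : F ⊆ G.edgeSet := fun e he => SimpleGraph.edgeSet_mono hHG he.1
  have hHunreach : ¬ (H.deleteEdges F).Reachable s t := by
    apply not_reachable_of_delta_empty hsX htX
    rw [delta_deleteEdges]
    exact Set.diff_eq_empty.2 (le_refl _)
  have hGunreach : ¬ (G.deleteEdges F).Reachable s t :=
    fun h => hHunreach (hrel F hFG hle h)
  obtain ⟨Z, hsZ, htZ, hsub, hge⟩ := unreach_in_G (h2ec := h2ec) hGunreach hst
  have hZcard : (delta G Z).ncard = 2 := by
    have := Set.ncard_le_ncard hsub (Set.toFinite _)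
    omega
  refine ⟨Z, ⟨hsZ, htZ, hZcard⟩, ?_⟩
  apply Set.eq_of_subset_of_ncard_le hsub _ (Set.toFinite _)
  omega

end RSND

namespace RSND
variable {V : Type*} [Fintype V] {G : SimpleGraph V} {s t : V}

lemma pair_of_cut2 {B : Set V} (hB : Cut2 G s t B) :
    ∃ g g₂ : Sym2 V, g ≠ g₂ ∧ delta G B = {g, g₂} := by
  obtain ⟨g, g₂, hne, h⟩ := Set.ncard_eq_two.1 hB.2.2
  exact ⟨g, g₂, hne, h⟩

lemma att_structure {x : V} (hx : Att G s t x) (hxs : x ≠ s) (hxt : x ≠ t) :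
    ∃ (B : Set V) (x' : V) (g g₂ : Sym2 V), Cut2 G s t B ∧ g = s(x, x') ∧
      g ∈ delta G B ∧ g₂ ∈ delta G B ∧ g ≠ g₂ ∧ delta G B = {g, g₂} := by
  rcases hx with rfl | rfl | ⟨B, hB, e, heB, hxe⟩
  · exact absurd rfl hxs
  · exact absurd rfl hxt
  obtain ⟨g, g₂, hne, hpair⟩ := pair_of_cut2 hB
  obtain ⟨x', hx'⟩ := Sym2.mem_iff_exists.1 hxe
  rw [hpair] at heB
  rcases heB with rfl | rfl
  · exact ⟨B, x', e, g₂, hB, hx', by rw [hpair]; left; rfl,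
      by rw [hpair]; right; rfl, hne, hpair⟩
  · exact ⟨B, x', e, g, hB, hx', by rw [hpair]; right; rfl,
      by rw [hpair]; left; rfl, hne.symm, by rw [hpair, Set.pair_comm]⟩

lemma cross_iff {K : SimpleGraph V} {A : Set V} {u v : V} (he : s(u,v) ∈ delta K A) :
    (u ∈ A) ↔ ¬(v ∈ A) := (mem_delta_iff.1 he).2

/-- the "other edge" of a 2-element boundary -/
lemma other_edge {A : Set (Sym2 V)} (hcard : A.ncard = 2) {g : Sym2 V} (hg : g ∈ A) :
    ∃ h, h ≠ g ∧ A = {g, h} := by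
  obtain ⟨e₁, e₂, hne, hp⟩ := Set.ncard_eq_two.1 hcard
  rw [hp] at hg
  rcases hg with rfl | rfl
  · exact ⟨e₂, hne.symm, hp⟩
  · exact ⟨e₁, hne, by rw [hp, Set.pair_comm]⟩

lemma ncard_pair_le (a b : Sym2 V) : ({a, b} : Set (Sym2 V)).ncard ≤ 2 :=
  le_trans (Set.ncard_insert_le _ _) (by simp)

lemma mem_of_eq_sym2 {u v x y : V} (h : s(u,v) = s(x,y)) :
    (u = x ∧ v = y) ∨ (u = y ∧ v = x) := Sym2.eq_iff.1 h

set_option maxHeartbeats 2000000 in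
/-- core of Lemma C -/
lemma lemC_core (h2ec : TwoEdgeConnected G) {θ φ : V}
    (hθA : Att G s t θ) (hblock : SameBlock G s t θ φ) {W : Set V}
    (hθW : θ ∈ W) (hφW : φ ∉ W) (hsW : s ∉ W) (htW : t ∉ W)
    (hWcard : (delta G W).ncard = 2) : False := by
  classical
  have hθs : θ ≠ s := fun h => hsW (h ▸ hθW)
  have hθt : θ ≠ t := fun h => htW (h ▸ hθW)
  obtain ⟨B, θ', g, g₂, hB, hg, hgB, hg₂B, hgne, hpair⟩ := att_structure hθA hθs hθt
  have hsB : s ∈ B := hB.1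
  have htB : t ∉ B := hB.2.1
  rcases Set.eq_empty_or_nonempty (W ∩ B) with hWiB | hWiB
  · -- case W ∩ B = ∅ : use W ∪ B
    have hWB : ∀ x, x ∈ W → x ∉ B := by
      intro x hx hxB
      exact absurd (Set.eq_empty_iff_forall_notMem.1 hWiB x) (fun hc => hc ⟨hx, hxB⟩)
    have hθB : θ ∉ B := hWB θ hθW
    have hθ'B : θ' ∈ B := by have := cross_iff (hg ▸ hgB); tauto
    have hθ'W : θ' ∉ W := fun h => hWB θ' h hθ'B
    have hgW : g ∈ delta G W := by
      rw [hg, mem_delta_iff]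
      exact ⟨(hg ▸ hgB).1, by tauto⟩
    obtain ⟨h, hhg, hWpair⟩ := other_edge hWcard hgW
    have hsub : delta G (W ∪ B) ⊆ {h, g₂} := by
      intro e' he'
      induction e' using Sym2.ind with
      | _ u v =>
        obtain ⟨heE, hiff⟩ := mem_delta_iff.1 he'
        simp only [Set.mem_union] at hiff
        have key : ∀ u v : V, s(u,v) = s(u,v) → s(u,v) ∈ G.edgeSet →
            (u ∈ W ∨ u ∈ B) → ¬(v ∈ W ∨ v ∈ B) → s(u,v) ∈ ({h, g₂} : Set (Sym2 V)) := by
          intro u v _ heE hu hv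
          push_neg at hv
          rcases hu with huW | huB
          · have : s(u,v) ∈ delta G W := mem_delta_iff.2 ⟨heE, by tauto⟩
            rw [hWpair] at this
            rcases this with h1 | h1
            · exfalso
              rcases mem_of_eq_sym2 (h1.trans hg) with ⟨rfl, rfl⟩ | ⟨rfl, rfl⟩
              · exact hv.2 hθ'B
              · exact hv.1 hθW
            · left; exact h1
          · have huW : u ∉ W := fun hc => hWB u hc huB
            have : s(u,v) ∈ delta G B := mem_delta_iff.2 ⟨heE, by tauto⟩
            rw [hpair] at this
            rcases this with h1 | h1
            · exfalso
              rcases mem_of_eq_sym2 (h1.trans hg) with ⟨rfl, rfl⟩ | ⟨rfl, rfl⟩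
              · exact hθB huB
              · exact hv.1 hθW
            · right; exact h1
        by_cases hu : u ∈ W ∨ u ∈ B
        · exact key u v rfl heE hu (by tauto)
        · have := key v u rfl (by rwa [Sym2.eq_swap]) (by tauto) (by tauto)
          rcases this with h1 | h1
          · left; rw [Sym2.eq_swap]; exact h1
          · right; rw [Sym2.eq_swap]; exact h1
    have hcard2 : (delta G (W ∪ B)).ncard = 2 := by
      have hle : (delta G (W ∪ B)).ncard ≤ 2 :=
        le_trans (Set.ncard_le_ncard hsub (Set.toFinite _)) (ncard_pair_le _ _)
      have hge : 2 ≤ (delta G (W ∪ B)).ncard :=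
        two_ec_ncard h2ec ⟨s, Or.inr hsB⟩ ⟨t, fun hc => hc.elim htW htB⟩
      omega
    have hC : Cut2 G s t (W ∪ B) := ⟨Or.inr hsB, fun hc => hc.elim htW htB, hcard2⟩
    have hbl := hblock _ hC
    have hφB : φ ∉ B := fun hc => hθB ((hblock B hB).2 hc)
    simp only [Set.mem_union] at hbl
    tauto
  · rcases Set.eq_empty_or_nonempty (W \ B) with hWdB | hWdB
    · -- case W ⊆ B : use B \ W
      have hWsubB : W ⊆ B := by
        intro x hx
        by_contra hxB
        exact absurd (Set.eq_empty_iff_forall_notMem.1 hWdB x) (fun hc => hc ⟨hx, hxB⟩)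
      have hθB : θ ∈ B := hWsubB hθW
      have hθ'B : θ' ∉ B := by have := cross_iff (hg ▸ hgB); tauto
      have hθ'W : θ' ∉ W := fun h => hθ'B (hWsubB h)
      have hgW : g ∈ delta G W := by
        rw [hg, mem_delta_iff]
        exact ⟨(hg ▸ hgB).1, by tauto⟩
      obtain ⟨h, hhg, hWpair⟩ := other_edge hWcard hgW
      have hsub : delta G (B \ W) ⊆ {h, g₂} := by
        intro e' he'
        induction e' using Sym2.ind with
        | _ u v =>
          obtain ⟨heE, hiff⟩ := mem_delta_iff.1 he'
          simp only [Set.mem_diff] at hiff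
          have key : ∀ u v : V, s(u,v) = s(u,v) → s(u,v) ∈ G.edgeSet →
              (u ∈ B ∧ u ∉ W) → ¬(v ∈ B ∧ v ∉ W) → s(u,v) ∈ ({h, g₂} : Set (Sym2 V)) := by
            intro u v _ heE hu hv
            by_cases hvW : v ∈ W
            · have : s(u,v) ∈ delta G W := mem_delta_iff.2 ⟨heE, by tauto⟩
              rw [hWpair] at this
              rcases this with h1 | h1
              · exfalso
                rcases mem_of_eq_sym2 (h1.trans hg) with ⟨rfl, rfl⟩ | ⟨rfl, rfl⟩
                · exact hu.2 hθW
                · exact hθ'B hu.1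
              · left; exact h1
            · have hvB : v ∉ B := by tauto
              have : s(u,v) ∈ delta G B := mem_delta_iff.2 ⟨heE, by tauto⟩
              rw [hpair] at this
              rcases this with h1 | h1
              · exfalso
                rcases mem_of_eq_sym2 (h1.trans hg) with ⟨rfl, rfl⟩ | ⟨rfl, rfl⟩
                · exact hu.2 hθW
                · exact hθ'B hu.1
              · right; exact h1
          by_cases hu : u ∈ B ∧ u ∉ W
          · exact key u v rfl heE hu (by tauto)
          · have hv : v ∈ B ∧ v ∉ W := by tauto
            have := key v u rfl (by rwa [Sym2.eq_swap]) hv (by tauto)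
            rcases this with h1 | h1
            · left; rw [Sym2.eq_swap]; exact h1
            · right; rw [Sym2.eq_swap]; exact h1
      have hcard2 : (delta G (B \ W)).ncard = 2 := by
        have hle : (delta G (B \ W)).ncard ≤ 2 :=
          le_trans (Set.ncard_le_ncard hsub (Set.toFinite _)) (ncard_pair_le _ _)
        have hge : 2 ≤ (delta G (B \ W)).ncard :=
          two_ec_ncard h2ec ⟨s, hsB, hsW⟩ ⟨t, fun hc => htB hc.1⟩
        omega
      have hC : Cut2 G s t (B \ W) := ⟨⟨hsB, hsW⟩, fun hc => htB hc.1, hcard2⟩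
      have hbl := hblock _ hC
      have hφB : φ ∈ B := (hblock B hB).1 hθB
      simp only [Set.mem_diff] at hbl
      tauto
    · -- both nonempty : submodular uncrossing
      have h1 : 2 ≤ (delta G (W \ B)).ncard :=
        two_ec_ncard h2ec hWdB ⟨s, fun hc => hsW hc.1⟩
      have h2 : 2 ≤ (delta G (B \ W)).ncard :=
        two_ec_ncard h2ec ⟨s, hsB, hsW⟩ ⟨t, fun hc => htB hc.1⟩
      have h3 : 2 ≤ (delta G (W ∩ B)).ncard :=
        two_ec_ncard h2ec hWiB ⟨t, fun hc => htB hc.2⟩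
      have h4 : 2 ≤ (delta G (W ∪ B)).ncard :=
        two_ec_ncard h2ec ⟨s, Or.inr hsB⟩ ⟨t, fun hc => hc.elim htW htB⟩
      have hs2 := submod2 G W B
      have hs1 := submod1 G W B
      rw [hWcard, hB.2.2] at hs2 hs1
      by_cases hθB : θ ∈ B
      · have hC : Cut2 G s t (B \ W) := ⟨⟨hsB, hsW⟩, fun hc => htB hc.1, by omega⟩
        have hbl := hblock _ hC
        have hφB : φ ∈ B := (hblock B hB).1 hθB
        simp only [Set.mem_diff] at hbl
        tauto
      · have hC : Cut2 G s t (W ∪ B) := ⟨Or.inr hsB, fun hc => hc.elim htW htB, by omega⟩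
        have hbl := hblock _ hC
        have hφB : φ ∉ B := fun hc => hθB ((hblock B hB).2 hc)
        simp only [Set.mem_union] at hbl
        tauto

end RSND

namespace RSND
variable {V : Type*} [Fintype V] {G H : SimpleGraph V} {s t : V}

lemma lemC (h2ec : TwoEdgeConnected G) {a b : V}
    (haA : Att G s t a) (hbA : Att G s t b) (hblock : SameBlock G s t a b)
    {Z : Set V} (haZ : a ∈ Z) (hbZ : b ∉ Z) (hcard : (delta G Z).ncard ≤ 2) : False := by
  have hZ2 : (delta G Z).ncard = 2 := by
    have := two_ec_ncard h2ec ⟨a, haZ⟩ ⟨b, hbZ⟩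
    omega
  by_cases hsZ : s ∈ Z <;> by_cases htZ : t ∈ Z
  · -- s,t ∈ Z : use Zᶜ with θ := b
    exact lemC_core h2ec hbA (fun B hB => (hblock B hB).symm)
      (Set.mem_compl hbZ) (fun hc => hc haZ) (fun hc => hc hsZ) (fun hc => hc htZ)
      (by rw [delta_compl]; exact hZ2)
  · -- s ∈ Z, t ∉ Z : Z is a 2-cut separating s,t
    exact hbZ ((hblock Z ⟨hsZ, htZ, hZ2⟩).1 haZ)
  · -- t ∈ Z, s ∉ Z : Zᶜ is a 2-cut
    have hC : Cut2 G s t Zᶜ := ⟨hsZ, fun hc => hc htZ, by rw [delta_compl]; exact hZ2⟩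
    exact absurd ((hblock _ hC).2 (Set.mem_compl hbZ)) (fun hc => hc haZ)
  · -- s,t ∉ Z
    exact lemC_core h2ec haA hblock haZ hbZ hsZ htZ hZ2

/-- both endpoints of an H-edge lie on the same side of a set with empty H-boundary -/
lemma same_side_of_empty {Δ' : Set V} (hΔ : delta H Δ' = ∅) {u v : V}
    (he : s(u,v) ∈ H.edgeSet) (hu : u ∈ Δ') : v ∈ Δ' := by
  by_contra hv
  exact absurd (hΔ ▸ mem_delta_iff.2 ⟨he, by tauto⟩) (Set.notMem_empty _)

/-- TRICK: q is deleted; the only edge crossing B is p; if p cannot cross X,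
where X is built from Δ' and B, then s,t get disconnected, contradicting Rel3. -/
lemma trick (h2ec : TwoEdgeConnected G) (hHG : H ≤ G) (hrel : Rel3 G H s t)
    {B : Set V} (hB : Cut2 G s t B) {p q : Sym2 V} (hpq : p ≠ q)
    (hpair : delta G B = {p, q}) (hBH : delta G B ⊆ H.edgeSet)
    {X : Set V} (hsX : s ∈ X) (htX : t ∉ X)
    (hclosed : delta (H.deleteEdges {q}) X = ∅) : False := by
  have hq : q ∈ G.edgeSet := by
    apply delta_subset_edgeSet (A := B)
    rw [hpair]
    right; rfl
  have hGq : (G.deleteEdges {q}).Reachable s t := (h2ec.2 q hq).preconnected s t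
  have hHq : (H.deleteEdges {q}).Reachable s t := by
    apply hrel {q} (Set.singleton_subset_iff.2 hq)
    · rw [Set.ncard_singleton]; omega
    · exact hGq
  exact not_reachable_of_delta_empty hsX htX hclosed hHq

/-- delta H B = delta G B for a forced cut -/
lemma delta_forced (hHG : H ≤ G) {B : Set V} (hBH : delta G B ⊆ H.edgeSet) :
    delta H B = delta G B :=
  Set.Subset.antisymm (delta_mono hHG B) (fun e he => ⟨hBH he, he.2⟩)

/-- computing the closed set for TRICK-OUT : X = Δ' ∩ B -/
lemma closed_out {Δ' B : Set V} (hΔ : delta H Δ' = ∅) {p q : Sym2 V}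
    (hδKB : delta (H.deleteEdges {q}) B = {p})
    (hp : ∀ u v : V, p = s(u,v) → ¬(u ∈ Δ' ∧ v ∈ Δ')) :
    delta (H.deleteEdges {q}) (Δ' ∩ B) = ∅ := by
  classical
  ext e
  induction e using Sym2.ind with
  | _ u v =>
    simp only [Set.mem_empty_iff_false, iff_false]
    intro he
    obtain ⟨heE, hiff⟩ := mem_delta_iff.1 he
    have heH : s(u,v) ∈ H.edgeSet := by
      rw [SimpleGraph.edgeSet_deleteEdges] at heE
      exact heE.1
    simp only [Set.mem_inter_iff] at hiff
    -- wlog u ∈ Δ'∩B, v ∉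
    have key : ∀ u v : V, s(u,v) ∈ (H.deleteEdges {q}).edgeSet →
        (u ∈ Δ' ∧ u ∈ B) → ¬(v ∈ Δ' ∧ v ∈ B) → False := by
      intro u v heE hu hv
      have heH : s(u,v) ∈ H.edgeSet := by
        rw [SimpleGraph.edgeSet_deleteEdges] at heE
        exact heE.1
      have hvΔ : v ∈ Δ' := same_side_of_empty hΔ heH hu.1
      have hvB : v ∉ B := by tauto
      have : s(u,v) ∈ delta (H.deleteEdges {q}) B :=
        mem_delta_iff.2 ⟨heE, by tauto⟩
      rw [hδKB] at this
      exact hp u v ((Set.mem_singleton_iff.1 this).symm) ⟨hu.1, hvΔ⟩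
    by_cases hu : u ∈ Δ' ∧ u ∈ B
    · exact key u v heE hu (by tauto)
    · exact key v u (by rwa [Sym2.eq_swap]) (by tauto) (by tauto)

/-- computing the closed set for TRICK-IN : X = B \ Δ' -/
lemma closed_in {Δ' B : Set V} (hΔ : delta H Δ' = ∅) {p q : Sym2 V}
    (hδKB : delta (H.deleteEdges {q}) B = {p})
    (hp : ∀ u v : V, p = s(u,v) → (u ∈ Δ' ∧ v ∈ Δ')) :
    delta (H.deleteEdges {q}) (B \ Δ') = ∅ := by
  classical
  ext e
  induction e using Sym2.ind with
  | _ u v =>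
    simp only [Set.mem_empty_iff_false, iff_false]
    intro he
    obtain ⟨heE, hiff⟩ := mem_delta_iff.1 he
    have key : ∀ u v : V, s(u,v) ∈ (H.deleteEdges {q}).edgeSet →
        (u ∈ B ∧ u ∉ Δ') → ¬(v ∈ B ∧ v ∉ Δ') → False := by
      intro u v heE hu hv
      have heH : s(u,v) ∈ H.edgeSet := by
        rw [SimpleGraph.edgeSet_deleteEdges] at heE
        exact heE.1
      have hvΔ : v ∉ Δ' := fun hc =>
        hu.2 (same_side_of_empty hΔ (by rwa [Sym2.eq_swap]) hc)
      have hvB : v ∉ B := by tauto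
      have : s(u,v) ∈ delta (H.deleteEdges {q}) B :=
        mem_delta_iff.2 ⟨heE, by tauto⟩
      rw [hδKB] at this
      exact hu.2 (hp u v (Set.mem_singleton_iff.1 this).symm).1
    simp only [Set.mem_diff] at hiff
    by_cases hu : u ∈ B ∧ u ∉ Δ'
    · exact key u v heE hu (by tauto)
    · exact key v u (by rwa [Sym2.eq_swap]) (by tauto) (by tauto)

end RSND

namespace RSND
variable {V : Type*} [Fintype V] {G H : SimpleGraph V} {s t : V}

lemma delta_del_pair {B : Set V} {p q : Sym2 V} (hpq : p ≠ q) (hHG : H ≤ G)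
    (hpair : delta G B = {p, q}) (hBH : delta G B ⊆ H.edgeSet) :
    delta (H.deleteEdges {q}) B = {p} := by
  rw [delta_deleteEdges, delta_forced hHG hBH, hpair]
  ext e
  simp only [Set.mem_diff, Set.mem_insert_iff, Set.mem_singleton_iff]
  constructor
  · rintro ⟨rfl | rfl, hne⟩
    · rfl
    · exact absurd rfl hne
  · rintro rfl
    exact ⟨Or.inl rfl, hpq⟩

lemma TRICKOUT (h2ec : TwoEdgeConnected G) (hHG : H ≤ G) (hrel : Rel3 G H s t)
    {B : Set V} (hB : Cut2 G s t B) {p q : Sym2 V} (hpq : p ≠ q)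
    (hpair : delta G B = {p, q}) (hBH : delta G B ⊆ H.edgeSet)
    {Δ' : Set V} (hΔ : delta H Δ' = ∅) (hsΔ : s ∈ Δ')
    {w : V} (hwp : w ∈ p) (hwΔ : w ∉ Δ') : False := by
  have hδK := delta_del_pair hpq hHG hpair hBH
  have hp : ∀ u v : V, p = s(u,v) → ¬(u ∈ Δ' ∧ v ∈ Δ') := by
    rintro u v rfl ⟨hu, hv⟩
    rcases Sym2.mem_iff.1 hwp with rfl | rfl
    · exact hwΔ hu
    · exact hwΔ hv
  exact trick h2ec hHG hrel hB hpq hpair hBH (X := Δ' ∩ B) ⟨hsΔ, hB.1⟩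
    (fun hc => hB.2.1 hc.2) (closed_out hΔ hδK hp)

lemma TRICKIN (h2ec : TwoEdgeConnected G) (hHG : H ≤ G) (hrel : Rel3 G H s t)
    {B : Set V} (hB : Cut2 G s t B) {p q : Sym2 V} (hpq : p ≠ q)
    (hpair : delta G B = {p, q}) (hBH : delta G B ⊆ H.edgeSet)
    {Δ' : Set V} (hΔ : delta H Δ' = ∅) (hsΔ : s ∉ Δ')
    {w : V} (hwp : w ∈ p) (hwΔ : w ∈ Δ') : False := by
  have hδK := delta_del_pair hpq hHG hpair hBH
  have hpH : p ∈ H.edgeSet := by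
    apply hBH; rw [hpair]; left; rfl
  have hp : ∀ u v : V, p = s(u,v) → (u ∈ Δ' ∧ v ∈ Δ') := by
    rintro u v rfl
    rcases Sym2.mem_iff.1 hwp with rfl | rfl
    · exact ⟨hwΔ, same_side_of_empty hΔ hpH hwΔ⟩
    · exact ⟨same_side_of_empty hΔ (by rwa [Sym2.eq_swap] at hpH) hwΔ, hwΔ⟩
  exact trick h2ec hHG hrel hB hpq hpair hBH (X := B \ Δ') ⟨hB.1, hsΔ⟩
    (fun hc => hB.2.1 hc.1) (closed_in hΔ hδK hp)

set_option maxHeartbeats 2000000 in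
/-- main soundness lemma, minimal-counterexample form -/
lemma A3_min (h2ec : TwoEdgeConnected G) (hst : s ≠ t) (hHG : H ≤ G)
    (hforced : ∀ B : Set V, Cut2 G s t B → delta G B ⊆ H.edgeSet)
    (hrel : Rel3 G H s t) {α β : V}
    (hαA : Att G s t α) (hβA : Att G s t β) (hblock : SameBlock G s t α β)
    {W : Set V} (hsW : s ∉ W) (htW : t ∉ W) (hαW : α ∈ W) (hβW : β ∉ W)
    (hWcard : (delta H W).ncard ≤ 2)
    (hmin : ∀ W' : Set V, W' ⊆ W → s ∉ W' → t ∉ W' →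
      ((α ∈ W' ∧ β ∉ W') ∨ (β ∈ W' ∧ α ∉ W')) → (delta H W').ncard ≤ 2 → W' = W) :
    False := by
  classical
  have hαs : α ≠ s := fun h => hsW (h ▸ hαW)
  have hαt : α ≠ t := fun h => htW (h ▸ hαW)
  obtain ⟨Bα, α', g, g₂, hBα, hg, hgBα, hg₂Bα, hgg₂, hpairα⟩ := att_structure hαA hαs hαt
  -- (S1)
  have S1 : ∀ B : Set V, Cut2 G s t B → (α ∈ B → W ⊆ B) ∧ (α ∉ B → W ∩ B = ∅) := by
    intro B hB
    have hdHB : (delta H B).ncard ≤ 2 := by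
      have := Set.ncard_le_ncard (delta_mono hHG B) (Set.toFinite _)
      rw [hB.2.2] at this
      omega
    constructor
    · intro hαB
      have hge : 2 ≤ (delta H (W ∪ B)).ncard :=
        T1lite h2ec hHG hrel hst (Or.inr hB.1) (fun hc => hc.elim htW hB.2.1)
      have hsub1 := submod1 H W B
      have hc' : (delta H (W ∩ B)).ncard ≤ 2 := by omega
      have heq : W ∩ B = W :=
        hmin _ Set.inter_subset_left (fun hc => hsW hc.1) (fun hc => htW hc.1)
          (Or.inl ⟨⟨hαW, hαB⟩, fun hc => hβW hc.1⟩) hc'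
      intro x hx
      rw [← heq] at hx
      exact hx.2
    · intro hαB
      have hge : 2 ≤ (delta H (B \ W)).ncard :=
        T1lite h2ec hHG hrel hst ⟨hB.1, hsW⟩ (fun hc => hB.2.1 hc.1)
      have hsub2 := submod2 H W B
      have hc' : (delta H (W \ B)).ncard ≤ 2 := by omega
      have heq : W \ B = W :=
        hmin _ Set.diff_subset (fun hc => hsW hc.1) (fun hc => htW hc.1)
          (Or.inl ⟨⟨hαW, hαB⟩, fun hc => hβW hc.1⟩) hc'
      ext x
      simp only [Set.mem_inter_iff, Set.mem_empty_iff_false, iff_false]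
      rintro ⟨hxW, hxB⟩
      rw [← heq] at hxW
      exact hxW.2 hxB
  -- (S2) : g crosses W
  have hgH : g ∈ H.edgeSet := hforced Bα hBα hgBα
  have hα'W : α' ∉ W := by
    by_cases hαB : α ∈ Bα
    · have hα'B : α' ∉ Bα := by have := cross_iff (hg ▸ hgBα); tauto
      exact fun hc => hα'B ((S1 Bα hBα).1 hαB hc)
    · have hα'B : α' ∈ Bα := by have := cross_iff (hg ▸ hgBα); tauto
      have hd := (S1 Bα hBα).2 hαB
      intro hc
      exact absurd (Set.eq_empty_iff_forall_notMem.1 hd α') (fun h => h ⟨hc, hα'B⟩)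
  have hgW : g ∈ delta H W := by
    rw [hg, mem_delta_iff]
    exact ⟨hg ▸ hgH, by tauto⟩
  -- (S3)
  set F' : Set (Sym2 V) := insert g₂ (delta H W \ {g}) with hF'def
  have hG2 : g₂ ∈ H.edgeSet := hforced Bα hBα hg₂Bα
  have hF'G : F' ⊆ G.edgeSet := by
    rintro e (rfl | ⟨he, -⟩)
    · exact SimpleGraph.edgeSet_mono hHG hG2
    · exact SimpleGraph.edgeSet_mono hHG he.1
  have hdiffcard : (delta H W \ {g}).ncard ≤ 1 := by
    have := Set.ncard_diff_singleton_lt_of_mem hgW (Set.toFinite _)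
    omega
  have hF'card : F'.ncard ≤ 2 := by
    have h1 : F'.ncard ≤ (delta H W \ {g}).ncard + 1 := by
      rw [hF'def]; exact Set.ncard_insert_le _ _
    omega
  have hδHBα : delta H Bα = delta G Bα := delta_forced hHG (hforced Bα hBα)
  have hgF' : g ∉ F' := by
    rintro (h | h)
    · exact hgg₂ h
    · exact h.2 rfl
  have hδKBα : delta (H.deleteEdges F') Bα = {g} := by
    rw [delta_deleteEdges, hδHBα, hpairα]
    ext e
    simp only [Set.mem_diff, Set.mem_insert_iff, Set.mem_singleton_iff]
    constructor
    · rintro ⟨rfl | rfl, hne⟩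
      · rfl
      · exact absurd (Or.inl rfl) hne
    · rintro rfl
      exact ⟨Or.inl rfl, hgF'⟩
  have hδKW : delta (H.deleteEdges F') W = {g} := by
    rw [delta_deleteEdges]
    ext e
    simp only [Set.mem_diff, Set.mem_singleton_iff]
    constructor
    · rintro ⟨he, hne⟩
      by_contra hneq
      exact hne (Or.inr ⟨he, hneq⟩)
    · rintro rfl
      exact ⟨hgW, hgF'⟩
  have hnotHF' : ¬ (H.deleteEdges F').Reachable s t := by
    apply not_reachable_of_delta_empty (A := symmDiff' Bα W)
      (mem_symmDiff'.2 (iff_of_true hBα.1 hsW))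
      (fun hc => hBα.2.1 ((mem_symmDiff'.1 hc).mpr htW))
    rw [delta_symmDiff, hδKBα, hδKW]
    ext e
    simp only [mem_symmDiff', Set.mem_singleton_iff, Set.mem_empty_iff_false, iff_false]
    tauto
  have hnotGF' : ¬ (G.deleteEdges F').Reachable s t :=
    fun h => hnotHF' (hrel F' hF'G hF'card h)
  obtain ⟨B₇, hsB₇, htB₇, hsubB₇, hgeB₇⟩ := unreach_in_G (h2ec := h2ec) hnotGF' hst
  have hF'2 : F'.ncard = 2 := by
    have := Set.ncard_le_ncard hsubB₇ (Set.toFinite _)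
    omega
  -- extract ζ
  have hdne : (delta H W \ {g}).Nonempty := by
    by_contra hc
    rw [Set.not_nonempty_iff_eq_empty] at hc
    rw [hF'def, hc] at hF'2
    simp [Set.ncard_singleton] at hF'2
  obtain ⟨ζ, hζmem⟩ := hdne
  have hζsingl : delta H W \ {g} = {ζ} := by
    symm
    apply Set.eq_of_subset_of_ncard_le (Set.singleton_subset_iff.2 hζmem) _ (Set.toFinite _)
    rw [Set.ncard_singleton]
    exact hdiffcard
  have hζg : ζ ≠ g := fun h => hζmem.2 (h ▸ rfl)
  have hζH : ζ ∈ H.edgeSet := hζmem.1.1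
  have hF'eq : F' = {g₂, ζ} := by rw [hF'def, hζsingl]
  have hζg₂ : ζ ≠ g₂ := by
    intro h
    rw [hF'eq, h] at hF'2
    simp [Set.ncard_singleton, Set.pair_eq_singleton] at hF'2
  have hδHW : delta H W = {g, ζ} := by
    have h1 : insert g (delta H W \ {g}) = delta H W := by
      rw [Set.insert_diff_singleton, Set.insert_eq_self.2 hgW]
    rw [← h1, hζsingl]
  have hpair₇ : delta G B₇ = {g₂, ζ} := by
    rw [← hF'eq]
    apply Set.eq_of_subset_of_ncard_le hsubB₇ _ (Set.toFinite _)
    omega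
  have hB₇ : Cut2 G s t B₇ := ⟨hsB₇, htB₇, by
    have : (delta G B₇).ncard = F'.ncard := by rw [hpair₇, hF'eq]
    omega⟩
  -- (S4)
  set D := symmDiff' Bα B₇ with hDdef
  have hδGD : delta G D = {g, ζ} := by
    rw [hDdef, delta_symmDiff, hpairα, hpair₇]
    ext e
    simp only [mem_symmDiff', Set.mem_insert_iff, Set.mem_singleton_iff]
    by_cases h1 : e = g
    · subst h1
      simp [hgg₂, Ne.symm hζg]
    · by_cases h2 : e = g₂
      · subst h2
        simp [Ne.symm hgg₂, Ne.symm hζg₂]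
      · by_cases h3 : e = ζ
        · subst h3
          simp [hζg, hζg₂]
        · simp [h1, h2, h3]
  have hgD : g ∈ delta G D := by rw [hδGD]; left; rfl
  have hζD : ζ ∈ delta G D := by rw [hδGD]; right; rfl
  have hδHD : delta H D = {g, ζ} := by
    apply Set.Subset.antisymm
    · intro e he
      rw [← hδGD]
      exact delta_mono hHG _ he
    · rintro e (rfl | rfl)
      · exact ⟨hgH, hgD.2⟩
      · exact ⟨hζH, hζD.2⟩
  set Δ' := symmDiff' D W with hΔ'def
  have hΔ : delta H Δ' = ∅ := by
    rw [hΔ'def, delta_symmDiff, hδHD, hδHW]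
    ext e
    simp only [mem_symmDiff', Set.mem_empty_iff_false, iff_false]
    tauto
  have hαg : α ∈ g := by rw [hg]; exact Sym2.mem_mk_left α α'
  -- (S5)
  by_cases hsD : s ∈ D <;> by_cases htD : t ∈ D
  · -- s,t ∈ D
    have hsΔ : s ∈ Δ' := mem_symmDiff'.2 (iff_of_true hsD hsW)
    by_cases hαD : α ∈ D
    · by_cases hβD : β ∈ D
      · have hαΔ : α ∉ Δ' := fun hc => ((mem_symmDiff'.1 hc).1 hαD) hαW
        exact TRICKOUT h2ec hHG hrel hBα hgg₂ hpairα (hforced _ hBα) hΔ hsΔ hαg hαΔ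
      · exact lemC h2ec hαA hβA hblock hαD hβD
          (by rw [hδGD]; exact ncard_pair_le _ _)
    · by_cases hβD : β ∈ D
      · exact lemC h2ec hβA hαA (fun B hB => (hblock B hB).symm) hβD hαD
          (by rw [hδGD]; exact ncard_pair_le _ _)
      · have hβs : β ≠ s := fun h => hβD (h ▸ hsD)
        have hβt : β ≠ t := fun h => hβD (h ▸ htD)
        obtain ⟨Bβ, β', hβe, h₂, hBβ, hhβ, hhβB, hh₂B, hne, hpairβ⟩ :=
          att_structure hβA hβs hβt
        have hβΔ : β ∉ Δ' := fun hc => hβD ((mem_symmDiff'.1 hc).2 hβW)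
        exact TRICKOUT h2ec hHG hrel hBβ hne hpairβ (hforced _ hBβ) hΔ hsΔ
          (by rw [hhβ]; exact Sym2.mem_mk_left β β') hβΔ
  · -- s ∈ D, t ∉ D : Δ' separates s,t in H
    have hsΔ : s ∈ Δ' := mem_symmDiff'.2 (iff_of_true hsD hsW)
    have htΔ : t ∉ Δ' := fun hc => htD ((mem_symmDiff'.1 hc).2 htW)
    have hGst : (G.deleteEdges ∅).Reachable s t := by
      rw [SimpleGraph.deleteEdges_empty]
      exact h2ec.1.preconnected s t
    have hHst := hrel ∅ (Set.empty_subset _) (by simp) hGst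
    rw [SimpleGraph.deleteEdges_empty] at hHst
    exact not_reachable_of_delta_empty hsΔ htΔ hΔ hHst
  · -- s ∉ D, t ∈ D
    have htΔ : t ∈ Δ' := mem_symmDiff'.2 (iff_of_true htD htW)
    have hsΔ : s ∉ Δ' := fun hc => hsD ((mem_symmDiff'.1 hc).2 hsW)
    have hGst : (G.deleteEdges ∅).Reachable s t := by
      rw [SimpleGraph.deleteEdges_empty]
      exact h2ec.1.preconnected s t
    have hHst := hrel ∅ (Set.empty_subset _) (by simp) hGst
    rw [SimpleGraph.deleteEdges_empty] at hHst
    exact not_reachable_of_delta_empty (Set.mem_compl hsΔ) (fun hc => hc htΔ)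
      (by rw [delta_compl]; exact hΔ) hHst
  · -- s,t ∉ D
    have hsΔ : s ∉ Δ' := fun hc => hsD ((mem_symmDiff'.1 hc).2 hsW)
    by_cases hαD : α ∈ D
    · by_cases hβD : β ∈ D
      · have hβs : β ≠ s := fun h => hsD (h ▸ hβD)
        have hβt : β ≠ t := fun h => htD (h ▸ hβD)
        obtain ⟨Bβ, β', hβe, h₂, hBβ, hhβ, hhβB, hh₂B, hne, hpairβ⟩ :=
          att_structure hβA hβs hβt
        have hβΔ : β ∈ Δ' := mem_symmDiff'.2 (iff_of_true hβD hβW)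
        exact TRICKIN h2ec hHG hrel hBβ hne hpairβ (hforced _ hBβ) hΔ hsΔ
          (by rw [hhβ]; exact Sym2.mem_mk_left β β') hβΔ
      · exact lemC h2ec hαA hβA hblock hαD hβD
          (by rw [hδGD]; exact ncard_pair_le _ _)
    · by_cases hβD : β ∈ D
      · exact lemC h2ec hβA hαA (fun B hB => (hblock B hB).symm) hβD hαD
          (by rw [hδGD]; exact ncard_pair_le _ _)
      · have hαΔ : α ∈ Δ' := mem_symmDiff'.2 (iff_of_false hαD (not_not_intro hαW))
        exact TRICKIN h2ec hHG hrel hBα hgg₂ hpairα (hforced _ hBα) hΔ hsΔ hαg hαΔ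

end RSND

namespace RSND
variable {V : Type*} [Fintype V] {G H : SimpleGraph V} {s t : V}

lemma delta_diff_subset (K : SimpleGraph V) (X Y : Set V) :
    delta K (X \ Y) ⊆ delta K X ∪ delta K Y := by
  intro e he
  induction e using Sym2.ind with
  | _ u v =>
    simp only [Set.mem_union, mem_delta_iff, Set.mem_diff] at he ⊢
    tauto

lemma delta_eq_inter (hHG : H ≤ G) (X : Set V) :
    delta H X = delta G X ∩ H.edgeSet := by
  ext e
  constructor
  · intro he
    exact ⟨delta_mono hHG X he, he.1⟩
  · rintro ⟨he, heH⟩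
    exact ⟨heH, he.2⟩

/-- Main soundness: no small H-cut separates a same-block attachment pair -/
lemma A3 (h2ec : TwoEdgeConnected G) (hst : s ≠ t) (hHG : H ≤ G)
    (hforced : ∀ B : Set V, Cut2 G s t B → delta G B ⊆ H.edgeSet)
    (hrel : Rel3 G H s t) {a b : V}
    (haA : Att G s t a) (hbA : Att G s t b) (hblock : SameBlock G s t a b)
    {Z : Set V} (haZ : a ∈ Z) (hbZ : b ∉ Z) (hZcard : (delta H Z).ncard ≤ 2) :
    False := by
  classical
  set 𝒲 : Set (Set V) :=
    {W | s ∉ W ∧ t ∉ W ∧ ((a ∈ W ∧ b ∉ W) ∨ (b ∈ W ∧ a ∉ W)) ∧ (delta H W).ncard ≤ 2}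
    with h𝒲def
  -- STEP A: the family is empty
  have stepA : ¬ 𝒲.Nonempty := by
    intro hne
    obtain ⟨W, hW, hmin⟩ := Set.exists_min_image 𝒲 Set.ncard (Set.toFinite _) hne
    obtain ⟨hsW, htW, hpos, hWcard⟩ := hW
    have hminW : ∀ W' : Set V, W' ⊆ W → s ∉ W' → t ∉ W' →
        ((a ∈ W' ∧ b ∉ W') ∨ (b ∈ W' ∧ a ∉ W')) → (delta H W').ncard ≤ 2 → W' = W := by
      intro W' hsub hs' ht' hp' hc'
      have hW' : W' ∈ 𝒲 := ⟨hs', ht', hp', hc'⟩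
      exact Set.eq_of_subset_of_ncard_le hsub (hmin W' hW') (Set.toFinite _)
    rcases hpos with ⟨haW, hbW⟩ | ⟨hbW, haW⟩
    · exact A3_min h2ec hst hHG hforced hrel haA hbA hblock hsW htW haW hbW hWcard hminW
    · exact A3_min h2ec hst hHG hforced hrel hbA haA
        (fun B hB => (hblock B hB).symm) hsW htW hbW haW hWcard
        (fun W' h1 h2 h3 h4 h5 => hminW W' h1 h2 h3 (Or.symm h4) h5)
  -- STEP 0: produce a member or a direct contradiction
  apply stepA
  by_cases hsZ : s ∈ Z <;> by_cases htZ : t ∈ Z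
  · -- s,t ∈ Z : use Zᶜ
    exact ⟨Zᶜ, fun hc => hc hsZ, fun hc => hc htZ,
      Or.inr ⟨Set.mem_compl hbZ, fun hc => hc haZ⟩, by rw [delta_compl]; exact hZcard⟩
  · -- s ∈ Z, t ∉ Z
    obtain ⟨B, hB, hpair⟩ := T1full h2ec hHG hrel hst hsZ htZ hZcard
    have hbound : ∀ X : Set V, delta H X ⊆ delta H Z → (delta H X).ncard ≤ 2 :=
      fun X hsub => le_trans (Set.ncard_le_ncard hsub (Set.toFinite _)) hZcard
    have hHB : delta H B ⊆ delta H Z :=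
      fun e he => hpair ▸ delta_mono hHG B he
    by_cases haB : a ∈ B
    · have hbB : b ∈ B := (hblock B hB).1 haB
      refine ⟨B \ Z, fun hc => hc.2 hsZ, fun hc => hB.2.1 hc.1,
        Or.inr ⟨⟨hbB, hbZ⟩, fun hc => hc.2 haZ⟩, hbound _ ?_⟩
      intro e he
      rcases delta_diff_subset H B Z he with h | h
      · exact hHB h
      · exact h
    · have hbB : b ∉ B := fun hc => haB ((hblock B hB).2 hc)
      refine ⟨Z \ B, fun hc => hc.2 hB.1, fun hc => htZ hc.1,
        Or.inl ⟨⟨haZ, haB⟩, fun hc => hbZ hc.1⟩, hbound _ ?_⟩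
      intro e he
      rcases delta_diff_subset H Z B he with h | h
      · exact h
      · exact hHB h
  · -- s ∉ Z, t ∈ Z : work with Zᶜ
    have hZc : (delta H Zᶜ).ncard ≤ 2 := by rw [delta_compl]; exact hZcard
    obtain ⟨B, hB, hpair⟩ := T1full h2ec hHG hrel hst (Set.mem_compl hsZ)
      (fun hc => hc htZ) hZc
    have hbound : ∀ X : Set V, delta H X ⊆ delta H Zᶜ → (delta H X).ncard ≤ 2 :=
      fun X hsub => le_trans (Set.ncard_le_ncard hsub (Set.toFinite _)) hZc
    have hHB : delta H B ⊆ delta H Zᶜ :=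
      fun e he => hpair ▸ delta_mono hHG B he
    by_cases haB : a ∈ B
    · have hbB : b ∈ B := (hblock B hB).1 haB
      refine ⟨B \ Zᶜ, fun hc => (hc.2 (Set.mem_compl hsZ)), fun hc => hB.2.1 hc.1,
        Or.inl ⟨⟨haB, fun hc => hc haZ⟩, fun hc => hc.2 (Set.mem_compl hbZ)⟩, hbound _ ?_⟩
      intro e he
      rcases delta_diff_subset H B Zᶜ he with h | h
      · exact hHB h
      · exact h
    · have hbB : b ∉ B := fun hc => haB ((hblock B hB).2 hc)
      refine ⟨Zᶜ \ B, fun hc => hc.2 hB.1, fun hc => hc.1 htZ,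
        Or.inr ⟨⟨Set.mem_compl hbZ, hbB⟩, fun hc => hc.1 haZ⟩, hbound _ ?_⟩
      intro e he
      rcases delta_diff_subset H Zᶜ B he with h | h
      · exact h
      · exact hHB h
  · -- s,t ∉ Z
    exact ⟨Z, hsZ, htZ, Or.inl ⟨haZ, hbZ⟩, hZcard⟩

end RSND

namespace RSND
variable {V : Type*} [Fintype V] {G H : SimpleGraph V} {s t : V}

lemma sameblock_refl (x : V) : SameBlock G s t x x := fun _ _ => Iff.rfl
lemma sameblock_symm {x y : V} (h : SameBlock G s t x y) : SameBlock G s t y x :=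
  fun B hB => (h B hB).symm
lemma sameblock_trans {x y z : V} (h1 : SameBlock G s t x y) (h2 : SameBlock G s t y z) :
    SameBlock G s t x z := fun B hB => (h1 B hB).trans (h2 B hB)

lemma symmDiff_subset_union (A B : Set (Sym2 V)) : symmDiff' A B ⊆ A ∪ B := by
  intro e he
  rcases he with h | h
  · exact Or.inl h.1
  · exact Or.inr h.1

set_option maxHeartbeats 2000000 in
lemma descent (h2ec : TwoEdgeConnected G) (hst : s ≠ t) (hHG : H ≤ G)
    (hforced : ∀ B : Set V, Cut2 G s t B → delta G B ⊆ H.edgeSet)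
    (hs2 : ∀ X : Set V, s ∈ X → t ∉ X → 2 ≤ (delta H X).ncard)
    (hcatch : ∀ x y : V, Att G s t x → Att G s t y → SameBlock G s t x y →
        ∀ Z : Set V, x ∈ Z → y ∉ Z → ¬((delta H Z).ncard ≤ 2))
    {e f : Sym2 V} (hef : e ≠ f)
    (hnp : ¬∃ B : Set V, Cut2 G s t B ∧ delta G B = {e, f}) :
    ∀ Y : Set V, s ∈ Y → t ∉ Y → delta H Y = {e, f} → False := by
  classical
  set SV : Set V → Set V :=
    fun Y => {x | ∃ y, SameBlock G s t x y ∧ (x ∈ Y ↔ y ∉ Y)} with hSV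
  suffices key : ∀ n : ℕ, ∀ Y : Set V, (SV Y).ncard = n → s ∈ Y → t ∉ Y →
      delta H Y = {e, f} → False by
    intro Y h1 h2 h3
    exact key _ Y rfl h1 h2 h3
  intro n
  induction n using Nat.strong_induction_on with
  | _ n ih =>
  intro Y hn hsY htY hδY
  by_cases hsplit : ∃ w : V, ({z | SameBlock G s t w z} ∩ Y).Nonempty ∧
      ({z | SameBlock G s t w z} \ Y).Nonempty
  · obtain ⟨w, ⟨x₀, hx₀b, hx₀Y⟩, ⟨y₀, hy₀b, hy₀Y⟩⟩ := hsplit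
    set T : Set V := {z | SameBlock G s t w z} with hT
    set P₁ : Set V := T ∩ Y with hP₁
    set P₂ : Set V := T \ Y with hP₂
    have hTY' : ∀ x y : V, x ∈ T → SameBlock G s t x y → y ∈ T :=
      fun x y hx hxy => sameblock_trans hx hxy
    by_cases hrem1 : ∀ x ∈ P₁, ¬ Att G s t x
    · -- remove P₁
      have hsP : s ∉ P₁ := fun hc => hrem1 s hc (Or.inl rfl)
      set Y' : Set V := Y \ P₁ with hY'
      have hsY' : s ∈ Y' := ⟨hsY, hsP⟩
      have htY' : t ∉ Y' := fun hc => htY hc.1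
      have hδGP : delta G P₁ ⊆ delta G Y := by
        rintro e' ⟨hE, u, v, rfl, huP, hvP⟩
        by_cases hvT : v ∈ T
        · have hvY : v ∉ Y := fun hc => hvP ⟨hvT, hc⟩
          exact ⟨hE, u, v, rfl, huP.2, hvY⟩
        · exfalso
          have hblk : ¬ SameBlock G s t u v :=
            fun hc => hvT (hTY' u v huP.1 hc)
          simp only [SameBlock, not_forall] at hblk
          obtain ⟨B, hB, hneq⟩ := hblk
          have : s(u,v) ∈ delta G B := mem_delta_iff.2 ⟨hE, by tauto⟩
          exact hrem1 u huP (Or.inr (Or.inr ⟨B, hB, _, this, Sym2.mem_mk_left u v⟩))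
      have hδHP : delta H P₁ ⊆ ({e, f} : Set (Sym2 V)) := by
        intro e' he'
        rw [← hδY]
        rw [delta_eq_inter hHG]
        exact ⟨hδGP (delta_mono hHG _ he'), he'.1⟩
      have hYeq : Y' = symmDiff' Y P₁ := by
        ext x
        simp only [hY', Set.mem_diff, mem_symmDiff', hP₁, Set.mem_inter_iff]
        tauto
      have hδsub : delta H Y' ⊆ ({e, f} : Set (Sym2 V)) := by
        rw [hYeq, delta_symmDiff]
        intro e' he'
        rcases symmDiff_subset_union _ _ he' with h | h
        · rw [hδY] at h; exact h
        · exact hδHP h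
      have hδeq : delta H Y' = {e, f} := by
        apply Set.eq_of_subset_of_ncard_le hδsub _ (Set.toFinite _)
        rw [Set.ncard_pair hef]
        exact hs2 Y' hsY' htY'
      -- measure decreases
      have hTsub : SV Y' ⊆ SV Y \ {x₀} := by
        rintro x ⟨y, hxy, hsp⟩
        have hxT : x ∉ T := by
          intro hxT
          have hyT : y ∈ T := hTY' x y hxT hxy
          have hx' : x ∉ Y' := fun hc => hc.2 ⟨hxT, hc.1⟩
          have hy' : y ∉ Y' := fun hc => hc.2 ⟨hyT, hc.1⟩
          tauto
        have hyT : y ∉ T := by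
          intro hyT
          exact hxT (hTY' y x hyT (sameblock_symm hxy))
        have hxP : x ∉ P₁ := fun hc => hxT hc.1
        have hyP : y ∉ P₁ := fun hc => hyT hc.1
        refine ⟨⟨y, hxy, ?_⟩, fun hc => hxT (by rw [Set.mem_singleton_iff] at hc; exact hc ▸ hx₀b)⟩
        have hx : x ∈ Y' ↔ x ∈ Y := ⟨fun h => h.1, fun h => ⟨h, hxP⟩⟩
        have hy : y ∈ Y' ↔ y ∈ Y := ⟨fun h => h.1, fun h => ⟨h, hyP⟩⟩
        rw [hx, hy] at hsp
        exact hsp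
      have hx₀SV : x₀ ∈ SV Y :=
        ⟨y₀, sameblock_trans (sameblock_symm hx₀b) hy₀b,
          iff_of_true hx₀Y hy₀Y⟩
      have hlt : (SV Y').ncard < n := by
        rw [← hn]
        apply Set.ncard_lt_ncard _ (Set.toFinite _)
        constructor
        · exact fun x hx => ((hTsub hx).1)
        · intro hc
          exact (hTsub (hc hx₀SV)).2 rfl
      exact ih _ hlt Y' rfl hsY' htY' hδeq
    · by_cases hrem2 : ∀ x ∈ P₂, ¬ Att G s t x
      · -- absorb P₂
        have htP : t ∉ P₂ := fun hc => hrem2 t hc (Or.inr (Or.inl rfl))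
        set Y' : Set V := Y ∪ P₂ with hY'
        have hsY' : s ∈ Y' := Or.inl hsY
        have htY' : t ∉ Y' := fun hc => hc.elim htY htP
        have hδGP : delta G P₂ ⊆ delta G Y := by
          rintro e' ⟨hE, u, v, rfl, huP, hvP⟩
          by_cases hvT : v ∈ T
          · have hvY : v ∈ Y := by
              by_contra hc
              exact hvP ⟨hvT, hc⟩
            exact ⟨hE, v, u, Sym2.eq_swap, hvY, huP.2⟩
          · exfalso
            have hblk : ¬ SameBlock G s t u v :=
              fun hc => hvT (hTY' u v huP.1 hc)
            simp only [SameBlock, not_forall] at hblk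
            obtain ⟨B, hB, hneq⟩ := hblk
            have : s(u,v) ∈ delta G B := mem_delta_iff.2 ⟨hE, by tauto⟩
            exact hrem2 u huP (Or.inr (Or.inr ⟨B, hB, _, this, Sym2.mem_mk_left u v⟩))
        have hδHP : delta H P₂ ⊆ ({e, f} : Set (Sym2 V)) := by
          intro e' he'
          rw [← hδY, delta_eq_inter hHG]
          exact ⟨hδGP (delta_mono hHG _ he'), he'.1⟩
        have hYeq : Y' = symmDiff' Y P₂ := by
          ext x
          rw [mem_symmDiff']
          show x ∈ Y ∪ P₂ ↔ _
          constructor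
          · rintro (h | h)
            · exact iff_of_true h (fun hc => hc.2 h)
            · exact iff_of_false h.2 (not_not_intro h)
          · intro h
            by_cases hx : x ∈ Y
            · exact Or.inl hx
            · exact Or.inr (by_contra fun hc => hx (h.mpr hc))
        have hδsub : delta H Y' ⊆ ({e, f} : Set (Sym2 V)) := by
          rw [hYeq, delta_symmDiff]
          intro e' he'
          rcases symmDiff_subset_union _ _ he' with h | h
          · rw [hδY] at h; exact h
          · exact hδHP h
        have hδeq : delta H Y' = {e, f} := by
          apply Set.eq_of_subset_of_ncard_le hδsub _ (Set.toFinite _)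
          rw [Set.ncard_pair hef]
          exact hs2 Y' hsY' htY'
        have hTsub : SV Y' ⊆ SV Y \ {x₀} := by
          rintro x ⟨y, hxy, hsp⟩
          have hxT : x ∉ T := by
            intro hxT
            have hyT : y ∈ T := hTY' x y hxT hxy
            have hx' : x ∈ Y' := by
              by_cases hc : x ∈ Y
              · exact Or.inl hc
              · exact Or.inr ⟨hxT, hc⟩
            have hy' : y ∈ Y' := by
              by_cases hc : y ∈ Y
              · exact Or.inl hc
              · exact Or.inr ⟨hyT, hc⟩
            tauto
          have hyT : y ∉ T := fun hyT => hxT (hTY' y x hyT (sameblock_symm hxy))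
          have hxP : x ∉ P₂ := fun hc => hxT hc.1
          have hyP : y ∉ P₂ := fun hc => hyT hc.1
          refine ⟨⟨y, hxy, ?_⟩, fun hc => hxT (by rw [Set.mem_singleton_iff] at hc; exact hc ▸ hx₀b)⟩
          have hx : x ∈ Y' ↔ x ∈ Y := ⟨fun h => h.elim id (fun hc => absurd hc hxP), Or.inl⟩
          have hy : y ∈ Y' ↔ y ∈ Y := ⟨fun h => h.elim id (fun hc => absurd hc hyP), Or.inl⟩
          rw [hx, hy] at hsp
          exact hsp
        have hx₀SV : x₀ ∈ SV Y :=
          ⟨y₀, sameblock_trans (sameblock_symm hx₀b) hy₀b, iff_of_true hx₀Y hy₀Y⟩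
        have hlt : (SV Y').ncard < n := by
          rw [← hn]
          apply Set.ncard_lt_ncard _ (Set.toFinite _)
          exact ⟨fun x hx => ((hTsub hx).1), fun hc => (hTsub (hc hx₀SV)).2 rfl⟩
        exact ih _ hlt Y' rfl hsY' htY' hδeq
      · -- catch
        push_neg at hrem1 hrem2
        obtain ⟨x, hxP, hxA⟩ := hrem1
        obtain ⟨y, hyP, hyA⟩ := hrem2
        have hxy : SameBlock G s t x y :=
          sameblock_trans (sameblock_symm hxP.1) hyP.1
        apply hcatch x y hxA hyA hxy Y hxP.2 hyP.2
        rw [hδY]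
        exact ncard_pair_le e f
  · -- no split class : Y itself is a forced 2-cut
    have hGH : delta G Y ⊆ H.edgeSet := by
      rintro e' ⟨hE, u, v, rfl, hu, hv⟩
      by_cases hxy : SameBlock G s t u v
      · exact absurd ⟨u, ⟨u, sameblock_refl u, hu⟩, ⟨v, hxy, hv⟩⟩ hsplit
      · simp only [SameBlock, not_forall] at hxy
        obtain ⟨B, hB, hneq⟩ := hxy
        exact hforced B hB (mem_delta_iff.2 ⟨hE, by tauto⟩)
    have hδGY : delta G Y = {e, f} := by
      rw [← hδY]
      apply Set.Subset.antisymm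
      · intro e' he'
        exact ⟨hGH he', he'.2⟩
      · exact delta_mono hHG Y
    exact hnp ⟨Y, ⟨hsY, htY, by rw [hδGY]; exact Set.ncard_pair hef⟩, hδGY⟩

end RSND

namespace RSND
variable {V : Type*} [Fintype V]

def Forced (G : SimpleGraph V) {ℓ : ℕ} (sd td : Fin ℓ → V) (kd : Fin ℓ → ℕ)
    (e : Sym2 V) : Prop :=
  ∃ i : Fin ℓ, kd i = 3 ∧ ∃ A : Set V, sd i ∈ A ∧ td i ∉ A ∧
    (delta G A).ncard = 2 ∧ e ∈ delta G A

def Valid (G : SimpleGraph V) {ℓ : ℕ} (sd td : Fin ℓ → V) (kd : Fin ℓ → ℕ)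
    (H : SimpleGraph V) : Prop :=
  H ≤ G ∧ ∀ e : Sym2 V, Forced G sd td kd e → e ∈ H.edgeSet

def RelSat (G : SimpleGraph V) {ℓ : ℕ} (sd td : Fin ℓ → V) (kd : Fin ℓ → ℕ)
    (H : SimpleGraph V) : Prop :=
  ∀ i : Fin ℓ, ∀ F : Set (Sym2 V), F ⊆ G.edgeSet → F.ncard ≤ kd i - 1 →
    (G.deleteEdges F).Reachable (sd i) (td i) →
    (H.deleteEdges F).Reachable (sd i) (td i)

def SatDem (H : SimpleGraph V) (u v : V) (r : ℕ) : Prop :=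
  ∀ F : Set (Sym2 V), F ⊆ H.edgeSet → F.ncard ≤ r - 1 →
    (H.deleteEdges F).Reachable u v

def ImpliedSet (G : SimpleGraph V) {ℓ : ℕ} (sd td : Fin ℓ → V) (kd : Fin ℓ → ℕ) :
    Set (V × V × ℕ) :=
  {d | d.1 ≠ d.2.1 ∧ 1 ≤ d.2.2 ∧ d.2.2 ≤ 3 ∧
    ∀ H : SimpleGraph V, Valid G sd td kd H → RelSat G sd td kd H →
      SatDem H d.1 d.2.1 d.2.2}

lemma implied_finite (G : SimpleGraph V) {ℓ : ℕ} (sd td : Fin ℓ → V) (kd : Fin ℓ → ℕ) :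
    (ImpliedSet G sd td kd).Finite := by
  classical
  apply Set.Finite.subset
    ((Set.finite_univ (α := V)).prod ((Set.finite_univ (α := V)).prod (Set.finite_Iic 3)))
  rintro ⟨u, v, r⟩ ⟨_, _, hr3, _⟩
  exact ⟨Set.mem_univ _, Set.mem_univ _, hr3⟩

variable {G : SimpleGraph V} {ℓ : ℕ} {sd td : Fin ℓ → V} {kd : Fin ℓ → ℕ}

lemma deleteEdges_inter (H : SimpleGraph V) (F : Set (Sym2 V)) :
    H.deleteEdges F = H.deleteEdges (F ∩ H.edgeSet) := by
  ext u v
  simp only [SimpleGraph.deleteEdges_adj, Set.mem_inter_iff]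
  constructor
  · rintro ⟨h1, h2⟩
    exact ⟨h1, fun hc => h2 hc.1⟩
  · rintro ⟨h1, h2⟩
    exact ⟨h1, fun hc => h2 ⟨hc, h1⟩⟩

lemma mem_impliedSet_iff {G : SimpleGraph V} {ℓ : ℕ} {sd td : Fin ℓ → V} {kd : Fin ℓ → ℕ}
    {x y : V} {r : ℕ} :
    ((x, y, r) : V × V × ℕ) ∈ ImpliedSet G sd td kd ↔
      (x ≠ y ∧ 1 ≤ r ∧ r ≤ 3 ∧
        ∀ H : SimpleGraph V, Valid G sd td kd H → RelSat G sd td kd H →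
          SatDem H x y r) := Iff.rfl

/-- (s,t,1) is implied -/
lemma mem1 (h2ec : TwoEdgeConnected G) (hst : ∀ i, sd i ≠ td i) (hk1 : ∀ i, 1 ≤ kd i)
    (i : Fin ℓ) : (sd i, td i, 1) ∈ ImpliedSet G sd td kd := by
  rw [mem_impliedSet_iff]
  refine ⟨hst i, le_refl _, by omega, ?_⟩
  intro H' hval hrel F hFH hFc
  have hF : F = ∅ := (Set.ncard_eq_zero (Set.toFinite _)).1 (by omega)
  subst hF
  rw [SimpleGraph.deleteEdges_empty]
  have := hrel i ∅ (Set.empty_subset _) (by simp) (by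
    rw [SimpleGraph.deleteEdges_empty]; exact h2ec.1.preconnected _ _)
  rwa [SimpleGraph.deleteEdges_empty] at this

/-- (s,t,2) is implied when the demand is ≥ 2 -/
lemma mem2 (h2ec : TwoEdgeConnected G) (hst : ∀ i, sd i ≠ td i)
    (i : Fin ℓ) (hki : 2 ≤ kd i) : (sd i, td i, 2) ∈ ImpliedSet G sd td kd := by
  rw [mem_impliedSet_iff]
  refine ⟨hst i, by omega, by omega, ?_⟩
  intro H' hval hrel F hFH hFc
  have hFG : F ⊆ G.edgeSet := fun e he => SimpleGraph.edgeSet_mono hval.1 (hFH he)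
  apply hrel i F hFG (by omega)
  rcases ncard_le_two_cases (show F.ncard ≤ 2 by omega) with rfl | ⟨x, rfl⟩ | ⟨x, y, hxy, rfl⟩
  · rw [SimpleGraph.deleteEdges_empty]
    exact h2ec.1.preconnected _ _
  · exact (h2ec.2 x (hFG rfl)).preconnected _ _
  · exfalso
    rw [Set.ncard_pair hxy] at hFc
    omega

/-- same-block attachment pair demands are implied (via A3) -/
lemma mem3 (h2ec : TwoEdgeConnected G) (hst : ∀ i, sd i ≠ td i)
    (i : Fin ℓ) (hki : kd i = 3) {x y : V} (hxy : x ≠ y)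
    (hx : Att G (sd i) (td i) x) (hy : Att G (sd i) (td i) y)
    (hblock : SameBlock G (sd i) (td i) x y) :
    (x, y, 3) ∈ ImpliedSet G sd td kd := by
  rw [mem_impliedSet_iff]
  refine ⟨hxy, by omega, le_refl _, ?_⟩
  intro H' hval hrel F hFH hFc
  by_contra hnr
  obtain ⟨Z, hxZ, hyZ, hZE⟩ := cut_from_unreach hnr
  rw [delta_deleteEdges, Set.diff_eq_empty] at hZE
  have hcard : (delta H' Z).ncard ≤ 2 := by
    have := Set.ncard_le_ncard hZE (Set.toFinite _)
    have h2 : F.ncard ≤ 2 := by omega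
    omega
  have hforced' : ∀ B : Set V, Cut2 G (sd i) (td i) B → delta G B ⊆ H'.edgeSet :=
    fun B hB e he => hval.2 e ⟨i, hki, B, hB.1, hB.2.1, hB.2.2, he⟩
  have hrel' : Rel3 G H' (sd i) (td i) := by
    intro F' h1 h2 h3
    exact hrel i F' h1 (by omega) h3
  exact A3 h2ec (hst i) hval.1 hforced' hrel' hx hy hblock hxZ hyZ hcard

set_option maxHeartbeats 1000000 in
lemma completeness (h2ec : TwoEdgeConnected G)
    (hst : ∀ i, sd i ≠ td i) (hk1 : ∀ i, 1 ≤ kd i) (hk3 : ∀ i, kd i ≤ 3)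
    (H : SimpleGraph V) (hHG : H ≤ G)
    (hforced : ∀ e : Sym2 V, Forced G sd td kd e → e ∈ H.edgeSet)
    (hsat : ∀ u v : V, ∀ r : ℕ, (u,v,r) ∈ ImpliedSet G sd td kd → SatDem H u v r) :
    RelSat G sd td kd H := by
  classical
  intro i F hFG hFcard hGreach
  rw [deleteEdges_inter]
  set F₀ : Set (Sym2 V) := F ∩ H.edgeSet with hF₀def
  have hF₀H : F₀ ⊆ H.edgeSet := Set.inter_subset_right
  have hF₀c : F₀.ncard ≤ F.ncard := Set.ncard_le_ncard Set.inter_subset_left (Set.toFinite _)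
  rcases (show kd i = 1 ∨ kd i = 2 ∨ kd i = 3 by have := hk1 i; have := hk3 i; omega)
    with hk | hk | hk
  · -- k = 1
    have h0 : F₀.ncard = 0 := by rw [hk] at hFcard; omega
    have : F₀ = ∅ := (Set.ncard_eq_zero (Set.toFinite _)).1 h0
    rw [this]
    exact hsat (sd i) (td i) 1 (mem1 h2ec hst hk1 i) ∅ (Set.empty_subset _) (by simp)
  · -- k = 2
    exact hsat (sd i) (td i) 2 (mem2 h2ec hst i (by omega)) F₀ hF₀H
      (by rw [hk] at hFcard; omega)
  · -- k = 3
    have hFc2 : F₀.ncard ≤ 2 := by rw [hk] at hFcard; omega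
    by_contra hnr
    obtain ⟨Z, hsZ, htZ, hZE⟩ := cut_from_unreach hnr
    rw [delta_deleteEdges, Set.diff_eq_empty] at hZE
    have hcardZ : (delta H Z).ncard ≤ 2 :=
      le_trans (Set.ncard_le_ncard hZE (Set.toFinite _)) hFc2
    have hs2 : ∀ X : Set V, sd i ∈ X → td i ∉ X → 2 ≤ (delta H X).ncard := by
      intro X hsX htX
      by_contra hc
      push_neg at hc
      have hreach := hsat (sd i) (td i) 2 (mem2 h2ec hst i (by omega)) (delta H X)
        (fun e he => he.1) (by omega)
      apply not_reachable_of_delta_empty hsX htX _ hreach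
      rw [delta_deleteEdges, Set.diff_eq_empty]
    have hcard2 : (delta H Z).ncard = 2 := le_antisymm hcardZ (hs2 Z hsZ htZ)
    obtain ⟨e, f, hef, hpairZ⟩ := Set.ncard_eq_two.1 hcard2
    have hnp : ¬∃ B : Set V, Cut2 G (sd i) (td i) B ∧ delta G B = {e, f} := by
      rintro ⟨B, hB, hpB⟩
      apply not_reachable_of_delta_empty hB.1 hB.2.1 _ hGreach
      rw [delta_deleteEdges, Set.diff_eq_empty]
      calc delta G B = {e, f} := hpB
        _ = delta H Z := hpairZ.symm
        _ ⊆ F₀ := hZE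
        _ ⊆ F := Set.inter_subset_left
    have hforced3 : ∀ B : Set V, Cut2 G (sd i) (td i) B → delta G B ⊆ H.edgeSet :=
      fun B hB e he => hforced e ⟨i, hk, B, hB.1, hB.2.1, hB.2.2, he⟩
    have hcatch : ∀ x y : V, Att G (sd i) (td i) x → Att G (sd i) (td i) y →
        SameBlock G (sd i) (td i) x y →
        ∀ Z' : Set V, x ∈ Z' → y ∉ Z' → ¬((delta H Z').ncard ≤ 2) := by
      intro x y hx hy hxy Z' hxZ hyZ hc
      have hne : x ≠ y := fun h => hyZ (h ▸ hxZ)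
      have hreach := hsat x y 3 (mem3 h2ec hst i hk hne hx hy hxy) (delta H Z')
        (fun e' he' => he'.1) (by omega)
      apply not_reachable_of_delta_empty hxZ hyZ _ hreach
      rw [delta_deleteEdges, Set.diff_eq_empty]
    exact descent h2ec (hst i) hHG hforced3 hs2 hcatch hef hnp Z hsZ htZ hpairZ

end RSND

theorem stmt_13 {V : Type*} [Fintype V] (G : SimpleGraph V)
    (h2ec : TwoEdgeConnected G)
    (ℓ : ℕ) (sd td : Fin ℓ → V) (kd : Fin ℓ → ℕ)
    (hst : ∀ i, sd i ≠ td i) (hk1 : ∀ i, 1 ≤ kd i) (hk3 : ∀ i, kd i ≤ 3) :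
    ∃ D' : Finset (V × V × ℕ),
      -- (i) every triple (u,v,r) in D' has u ≠ v, r ∈ {1,2,3}, and is an ordinary demand
      (∀ u v : V, ∀ r : ℕ, (u, v, r) ∈ D' →
        u ≠ v ∧ 1 ≤ r ∧ r ≤ 3 ∧
        ∀ F : Set (Sym2 V), F ⊆ G.edgeSet → F.ncard ≤ r - 1 →
          (G.deleteEdges F).Reachable u v) ∧
      -- (ii) for every spanning subgraph H of G containing all forced edges,
      -- H satisfies every relative demand (sᵢ, tᵢ, kᵢ) iff it satisfies all demands in D'
      (∀ H : SimpleGraph V, H ≤ G →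
        (∀ e : Sym2 V,
          (∃ i : Fin ℓ, kd i = 3 ∧ ∃ A : Set V, sd i ∈ A ∧ td i ∉ A ∧
            (delta G A).ncard = 2 ∧ e ∈ delta G A) → e ∈ H.edgeSet) →
        ((∀ i : Fin ℓ, ∀ F : Set (Sym2 V), F ⊆ G.edgeSet → F.ncard ≤ kd i - 1 →
            (G.deleteEdges F).Reachable (sd i) (td i) →
            (H.deleteEdges F).Reachable (sd i) (td i))
          ↔
         (∀ u v : V, ∀ r : ℕ, (u, v, r) ∈ D' →
            ∀ F : Set (Sym2 V), F ⊆ H.edgeSet → F.ncard ≤ r - 1 →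
              (H.deleteEdges F).Reachable u v))) := by
  classical
  refine ⟨(RSND.implied_finite G sd td kd).toFinset, ?_, ?_⟩
  · -- (i)
    intro u v r hmem
    rw [Set.Finite.mem_toFinset] at hmem
    obtain ⟨hne, hr1, hr3, hall⟩ := hmem
    refine ⟨hne, hr1, hr3, ?_⟩
    have hG : RSND.Valid G sd td kd G := ⟨le_refl _, fun e he => by
      obtain ⟨i, -, A, -, -, -, hA⟩ := he
      exact hA.1⟩
    exact hall G hG (fun i F _ _ h3 => h3)
  · -- (ii)
    intro H hHG hforced
    constructor
    · intro hrel u v r hmem F hFH hFc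
      rw [Set.Finite.mem_toFinset] at hmem
      exact hmem.2.2.2 H ⟨hHG, hforced⟩ hrel F hFH hFc
    · intro hsat
      exact RSND.completeness h2ec hst hk1 hk3 H hHG hforced
        (fun u v r hm => hsat u v r (by rw [Set.Finite.mem_toFinset]; exact hm))
end
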